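/- arXiv:2509.10351 — 3 statements merged into one kernel-verified Lean document; each statement's English description precedes it below -/
import Mathlib

section
/- Assume the utility functional U satisfies the upper Fatou property and is sensitivity equivalent, the risk functional R satisfies the lower Fatou property and positive star-shapedness, and either U or R is law-invariant. Then the following are equivalent: (a) (U,R)-portfolio selection is market-independent well posed; (b) (U,R)-portfolio selection is market-independent weakly well posed; (c) either U is sensitive to large losses or R is sensitive to large losses. -/
open MeasureTheory Filter
open scoped ENNReal

namespace URPaper

variable {Ω : Type*} [MeasurableSpace Ω]

/-- The payoff `π · X` of the portfolio `π` in the market `X`. -/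
def port {d : ℕ} (X : Fin d → Ω → ℝ) (π : Fin d → ℝ) : Ω → ℝ :=
  fun ω => ∑ i, π i * X i ω

/-- The scaled position `l • Y`. -/
def scale (l : ℝ) (Y : Ω → ℝ) : Ω → ℝ := fun ω => l * Y ω

/-- A functional is increasing (with respect to the a.s. order on `L¹`). -/
def MonoInc (μ : Measure Ω) (U : (Ω → ℝ) → EReal) : Prop :=
  ∀ Y Z : Ω → ℝ, Integrable Y μ → Integrable Z μ →
    (∀ᵐ ω ∂μ, Y ω ≤ Z ω) → U Y ≤ U Z

/-- A functional is decreasing (with respect to the a.s. order on `L¹`). -/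
def MonoDec (μ : Measure Ω) (R : (Ω → ℝ) → EReal) : Prop :=
  ∀ Y Z : Ω → ℝ, Integrable Y μ → Integrable Z μ →
    (∀ᵐ ω ∂μ, Y ω ≤ Z ω) → R Z ≤ R Y

/-- `U(∞)`: the limit of `U` along deterministic constants `y → ∞`
(equal to the supremum, since `U` is increasing along constants). -/
noncomputable def limConst (U : (Ω → ℝ) → EReal) : EReal := ⨆ y : ℝ, U (fun _ => y)

/-- A utility functional: increasing, normalized, `[-∞,∞)`-valued,
and satisfying `U(Y) < U(∞)` for all `Y ∈ L¹`. -/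
structure IsUtility (μ : Measure Ω) (U : (Ω → ℝ) → EReal) : Prop where
  mono : MonoInc μ U
  norm : U (fun _ => (0 : ℝ)) = 0
  ne_top : ∀ Y : Ω → ℝ, Integrable Y μ → U Y ≠ ⊤
  non_sat : ∀ Y : Ω → ℝ, Integrable Y μ → U Y < limConst U

/-- A risk functional: decreasing, normalized, `(-∞,∞]`-valued. -/
structure IsRisk (μ : Measure Ω) (R : (Ω → ℝ) → EReal) : Prop where
  mono : MonoDec μ R
  norm : R (fun _ => (0 : ℝ)) = 0
  ne_bot : ∀ Y : Ω → ℝ, Integrable Y μ → R Y ≠ ⊥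

/-- Positive star-shapedness: `R(λY) ≥ λ R(Y)` for `λ > 1`. -/
def PosStarShaped (μ : Measure Ω) (R : (Ω → ℝ) → EReal) : Prop :=
  ∀ Y : Ω → ℝ, Integrable Y μ → ∀ l : ℝ, 1 < l → (l : EReal) * R Y ≤ R (scale l Y)

/-- The lower Fatou property. -/
def LowerFatou (μ : Measure Ω) (R : (Ω → ℝ) → EReal) : Prop :=
  ∀ (Yn : ℕ → Ω → ℝ) (Y Z : Ω → ℝ), (∀ n, Integrable (Yn n) μ) →
    Integrable Y μ → Integrable Z μ →
    (∀ᵐ ω ∂μ, Tendsto (fun n => Yn n ω) atTop (nhds (Y ω))) →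
    (∀ n, ∀ᵐ ω ∂μ, |Yn n ω| ≤ Z ω) →
    R Y ≤ Filter.liminf (fun n => R (Yn n)) atTop

/-- The upper Fatou property. -/
def UpperFatou (μ : Measure Ω) (U : (Ω → ℝ) → EReal) : Prop :=
  ∀ (Yn : ℕ → Ω → ℝ) (Y Z : Ω → ℝ), (∀ n, Integrable (Yn n) μ) →
    Integrable Y μ → Integrable Z μ →
    (∀ᵐ ω ∂μ, Tendsto (fun n => Yn n ω) atTop (nhds (Y ω))) →
    (∀ n, ∀ᵐ ω ∂μ, |Yn n ω| ≤ Z ω) →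
    Filter.limsup (fun n => U (Yn n)) atTop ≤ U Y

/-- Sensitivity to large losses for a risk functional. -/
def SensLLRisk (μ : Measure Ω) (R : (Ω → ℝ) → EReal) : Prop :=
  ∀ Y : Ω → ℝ, Integrable Y μ → 0 < μ {ω | Y ω < 0} →
    ∃ l₀ : ℝ, 0 < l₀ ∧ ∀ l : ℝ, l₀ < l → 0 < R (scale l Y)

/-- Sensitivity to large losses for a utility functional. -/
def SensLLUtility (μ : Measure Ω) (U : (Ω → ℝ) → EReal) : Prop :=
  ∀ Y : Ω → ℝ, Integrable Y μ → 0 < μ {ω | Y ω < 0} →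
    ∃ l₀ : ℝ, 0 < l₀ ∧ ∀ l : ℝ, l₀ < l → U (scale l Y) < 0

/-- Weak sensitivity to large losses for a utility functional. -/
def WeakSensLLUtility (μ : Measure Ω) (U : (Ω → ℝ) → EReal) : Prop :=
  ∀ Y : Ω → ℝ, Integrable Y μ → 0 < μ {ω | Y ω < 0} →
    Filter.limsup (fun l : ℝ => U (scale l Y)) atTop < limConst U

/-- Sensitivity equivalence for a utility functional. -/
def SensEquivUtility (μ : Measure Ω) (U : (Ω → ℝ) → EReal) : Prop :=
  WeakSensLLUtility μ U ↔ SensLLUtility μ U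

/-- Law-invariance of a functional on `L¹`. -/
def LawInvariant (μ : Measure Ω) (H : (Ω → ℝ) → EReal) : Prop :=
  ∀ Y Z : Ω → ℝ, Integrable Y μ → Integrable Z μ →
    ProbabilityTheory.IdentDistrib Y Z μ μ → H Y = H Z

/-- Cash-additivity: `H(Y + c) = H(Y) + H(c)` for constants `c`. -/
def CashAdditive (μ : Measure Ω) (H : (Ω → ℝ) → EReal) : Prop :=
  ∀ Y : Ω → ℝ, Integrable Y μ → ∀ c : ℝ,
    H (fun ω => Y ω + c) = H Y + H (fun _ => c)

/-- Cash-convexity of a risk functional. -/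
def CashConvex (μ : Measure Ω) (R : (Ω → ℝ) → EReal) : Prop :=
  ∀ Y : Ω → ℝ, Integrable Y μ → ∀ c l : ℝ, 0 < l → l < 1 →
    R (fun ω => l * Y ω + (1 - l) * c) ≤
      (l : EReal) * R Y + ((1 - l : ℝ) : EReal) * R (fun _ => c)

/-- Cash-concavity of a utility functional. -/
def CashConcave (μ : Measure Ω) (U : (Ω → ℝ) → EReal) : Prop :=
  ∀ Y : Ω → ℝ, Integrable Y μ → ∀ c l : ℝ, 0 < l → l < 1 →
    (l : EReal) * U Y + ((1 - l : ℝ) : EReal) * U (fun _ => c) ≤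
      U (fun ω => l * Y ω + (1 - l) * c)

/-- Strict quasi-concavity of a utility functional. -/
def StrictQuasiConcave (μ : Measure Ω) (U : (Ω → ℝ) → EReal) : Prop :=
  ∀ Y Z : Ω → ℝ, Integrable Y μ → Integrable Z μ → 0 < μ {ω | Y ω ≠ Z ω} →
    ∀ l : ℝ, 0 < l → l < 1 →
      min (U Y) (U Z) < U (fun ω => l * Y ω + (1 - l) * Z ω)

/-- Quasi-convexity of a risk functional. -/
def QuasiConvex (μ : Measure Ω) (R : (Ω → ℝ) → EReal) : Prop :=
  ∀ Y Z : Ω → ℝ, Integrable Y μ → Integrable Z μ → ∀ l : ℝ, 0 < l → l < 1 →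
    R (fun ω => l * Y ω + (1 - l) * Z ω) ≤ max (R Y) (R Z)

/-- An atomless measure. -/
def Atomless (μ : Measure Ω) : Prop :=
  ∀ s : Set Ω, MeasurableSet s → μ s ≠ 0 →
    ∃ t : Set Ω, t ⊆ s ∧ MeasurableSet t ∧ 0 < μ t ∧ μ t < μ s

/-- A market: a finite tuple of integrable payoffs, non-redundant
(linearly independent in `L¹`) and arbitrage-free. -/
structure IsMarket (μ : Measure Ω) {d : ℕ} (X : Fin d → Ω → ℝ) : Prop where
  integrable : ∀ i, Integrable (X i) μ
  nonredundant : ∀ π : Fin d → ℝ, (∀ᵐ ω ∂μ, port X π ω = 0) → π = 0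
  no_arbitrage : ¬∃ π : Fin d → ℝ,
      (∀ᵐ ω ∂μ, 0 ≤ port X π ω) ∧ 0 < μ {ω | 0 < port X π ω}

/-- `(U,R)`-portfolio selection is weakly well posed for the market `X`. -/
def WeaklyWellPosedFor (U R : (Ω → ℝ) → EReal) {d : ℕ} (X : Fin d → Ω → ℝ) : Prop :=
  ∀ Rmax : ℝ, 0 ≤ Rmax →
    (⨆ π : {π : Fin d → ℝ // R (port X π) ≤ (Rmax : EReal)}, U (port X π.1)) < limConst U

/-- `(U,R)`-portfolio selection is well posed for the market `X`:
the supremum is attained by some portfolio. -/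
def WellPosedFor (U R : (Ω → ℝ) → EReal) {d : ℕ} (X : Fin d → Ω → ℝ) : Prop :=
  ∀ Rmax : ℝ, 0 ≤ Rmax →
    ∃ πs : Fin d → ℝ, R (port X πs) ≤ (Rmax : EReal) ∧
      ∀ π : Fin d → ℝ, R (port X π) ≤ (Rmax : EReal) → U (port X π) ≤ U (port X πs)

/-- Market-independent weak well-posedness. -/
def MIWeaklyWellPosed (μ : Measure Ω) (U R : (Ω → ℝ) → EReal) : Prop :=
  ∀ (d : ℕ), 0 < d → ∀ X : Fin d → Ω → ℝ, IsMarket μ X → WeaklyWellPosedFor U R X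

/-- Market-independent well-posedness. -/
def MIWellPosed (μ : Measure Ω) (U R : (Ω → ℝ) → EReal) : Prop :=
  ∀ (d : ℕ), 0 < d → ∀ X : Fin d → Ω → ℝ, IsMarket μ X → WellPosedFor U R X

/-- The market `X` admits `(U,R)`-arbitrage. -/
def URArbitrage (U R : (Ω → ℝ) → EReal) {d : ℕ} (X : Fin d → Ω → ℝ) : Prop :=
  ∃ (π : ℕ → Fin d → ℝ) (Rt : ℝ), 0 ≤ Rt ∧
    Tendsto (fun n => U (port X (π n))) atTop (nhds (limConst U)) ∧
    ∀ n, R (port X (π n)) ≤ (Rt : EReal)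

/-- The terminal payoff `θ · S̄₁` of a portfolio `θ` in a normalized market model
with interest rate `r` and risky payoffs `S`. -/
def mmPayoff {d : ℕ} (r : ℝ) (S : Fin d → Ω → ℝ) (θ : Fin (d + 1) → ℝ) : Ω → ℝ :=
  fun ω => θ 0 * (1 + r) + ∑ i : Fin d, θ i.succ * S i ω

/-- A normalized, arbitrage-free and non-redundant market model with `d` risky assets:
all initial prices are `1`, asset `0` is riskless with payoff `1 + r`. -/
structure MarketModel (μ : Measure Ω) (d : ℕ) where
  r : ℝ
  hr : -1 < r
  S : Fin d → Ω → ℝ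
  integrable : ∀ i, Integrable (S i) μ
  nonredundant : ∀ θ : Fin (d + 1) → ℝ, (∀ᵐ ω ∂μ, mmPayoff r S θ ω = 0) → θ = 0
  no_arbitrage : ¬∃ θ : Fin (d + 1) → ℝ, (∑ j, θ j) ≤ 0 ∧
    (∀ᵐ ω ∂μ, 0 ≤ mmPayoff r S θ ω) ∧ 0 < μ {ω | 0 < mmPayoff r S θ ω}

/-- The terminal payoff `θ · S̄₁`. -/
def payoff {μ : Measure Ω} {d : ℕ} (M : MarketModel μ d) (θ : Fin (d + 1) → ℝ) : Ω → ℝ :=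
  mmPayoff M.r M.S θ

/-- The initial cost `θ · S̄₀` (all initial prices are normalized to `1`). -/
def cost {μ : Measure Ω} {d : ℕ} (_M : MarketModel μ d) (θ : Fin (d + 1) → ℝ) : ℝ :=
  ∑ j, θ j

/-- The positive part of an extended real number, as an element of `ℝ≥0∞`. -/
noncomputable def posPart (x : EReal) : ℝ≥0∞ :=
  if x = ⊤ then ⊤ else ENNReal.ofReal x.toReal

/-- The expected utility `E[u(Y)]` of a position `Y`, as an extended real number. -/
noncomputable def expEU (μ : Measure Ω) (u : ℝ → EReal) (Y : Ω → ℝ) : EReal :=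
  ((∫⁻ ω, posPart (u (Y ω)) ∂μ : ℝ≥0∞) : EReal) -
    ((∫⁻ ω, posPart (-(u (Y ω))) ∂μ : ℝ≥0∞) : EReal)

/-- A utility function: increasing, normalized, `[-∞,∞)`-valued, non-satiated
(`u(∞) > u(z)` for all `z`), and of at most linear growth at `+∞`
(`limsup_{y→∞} u(y)/y < ∞`). -/
structure IsUtilityFun (u : ℝ → EReal) : Prop where
  mono : Monotone u
  norm : u 0 = 0
  ne_top : ∀ y : ℝ, u y ≠ ⊤
  non_sat : ∀ z : ℝ, u z < ⨆ y : ℝ, u y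
  growth : ∃ a : ℝ, ∀ᶠ y in (atTop : Filter ℝ), u y ≤ ((a * y : ℝ) : EReal)

/-- `u` is unbounded (its range is not contained in any bounded interval of `ℝ`). -/
def UnboundedFun (u : ℝ → EReal) : Prop :=
  ¬∃ C : ℝ, ∀ y : ℝ, ((-C : ℝ) : EReal) ≤ u y ∧ u y ≤ ((C : ℝ) : EReal)

/-- `u` is negatively star-shaped on `ℝ₊`: `u(λy) ≤ λ u(y)` for `y ≥ 0`, `λ ≥ 1`. -/
def NegStarShapedPos (u : ℝ → EReal) : Prop :=
  ∀ y : ℝ, 0 ≤ y → ∀ l : ℝ, 1 ≤ l → u (l * y) ≤ (l : EReal) * u y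

/-- The asymptotic loss-gain ratio `ALG(u) = limsup_{y→∞} u(-y)/u(y)`. -/
noncomputable def ALG (u : ℝ → EReal) : EReal :=
  Filter.limsup (fun y : ℝ => u (-y) / u y) atTop

/-- Strict concavity of a `[-∞,∞)`-valued utility function. -/
def StrictConcaveFun (u : ℝ → EReal) : Prop :=
  ∀ y z : ℝ, y ≠ z → ∀ l : ℝ, 0 < l → l < 1 →
    (l : EReal) * u y + ((1 - l : ℝ) : EReal) * u z < u (l * y + (1 - l) * z)


/-! ### Auxiliary lemmas -/

section Aux

variable {μ : Measure Ω}

lemma port_zero {d : ℕ} (X : Fin d → Ω → ℝ) : port X (0 : Fin d → ℝ) = fun _ => (0 : ℝ) := by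
  funext ω; simp [port]

lemma port_smul {d : ℕ} (X : Fin d → Ω → ℝ) (c : ℝ) (π : Fin d → ℝ) :
    port X (c • π) = scale c (port X π) := by
  funext ω; simp [port, scale, Finset.mul_sum, mul_assoc]

lemma integrable_port {d : ℕ} {X : Fin d → Ω → ℝ} (hX : ∀ i, Integrable (X i) μ)
    (π : Fin d → ℝ) : Integrable (port X π) μ := by
  have : Integrable (fun ω => ∑ i, π i * X i ω) μ :=
    integrable_finset_sum _ (fun i _ => (hX i).const_mul (π i))
  exact this

lemma integrable_scale (c : ℝ) {Y : Ω → ℝ} (hY : Integrable Y μ) :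
    Integrable (scale c Y) μ := hY.const_mul c

lemma abs_port_le {d : ℕ} (X : Fin d → Ω → ℝ) (π : Fin d → ℝ) (ω : Ω) :
    |port X π ω| ≤ ‖π‖ * ∑ i, |X i ω| := by
  calc |port X π ω| ≤ ∑ i, |π i * X i ω| := Finset.abs_sum_le_sum_abs _ _
    _ ≤ ∑ i, ‖π‖ * |X i ω| := by
        refine Finset.sum_le_sum (fun i _ => ?_)
        rw [abs_mul]
        exact mul_le_mul_of_nonneg_right (by
          simpa using norm_le_pi_norm π i) (abs_nonneg _)
    _ = ‖π‖ * ∑ i, |X i ω| := by rw [Finset.mul_sum]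

lemma U_congr {U : (Ω → ℝ) → EReal} (hm : MonoInc μ U) {f g : Ω → ℝ}
    (hf : Integrable f μ) (hg : Integrable g μ) (h : f =ᵐ[μ] g) : U f = U g :=
  le_antisymm (hm f g hf hg h.le) (hm g f hg hf h.symm.le)

lemma R_congr {R : (Ω → ℝ) → EReal} (hm : MonoDec μ R) {f g : Ω → ℝ}
    (hf : Integrable f μ) (hg : Integrable g μ) (h : f =ᵐ[μ] g) : R f = R g :=
  le_antisymm (hm g f hg hf h.symm.le) (hm f g hf hg h.le)

lemma limConst_pos [IsProbabilityMeasure μ] {U : (Ω → ℝ) → EReal} (hU : IsUtility μ U) :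
    0 < limConst U := by
  have := hU.non_sat (fun _ => (0 : ℝ)) (integrable_const 0)
  rwa [hU.norm] at this

/-- From `(c:EReal) * x ≤ y ≤ 0` with `0 < c` conclude `x ≤ 0`. -/
lemma EReal.le_zero_of_mul_le {c : ℝ} (hc : 0 < c) {x y : EReal}
    (h : (c : EReal) * x ≤ y) (hy : y ≤ 0) : x ≤ 0 := by
  by_contra hx
  push_neg at hx
  have : (0 : EReal) < (c : EReal) * x :=
    EReal.mul_pos (by exact_mod_cast hc) hx
  exact absurd (this.trans_le (h.trans hy)) (lt_irrefl _)

end Aux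

/-! ### Sierpiński: atomless measures attain all intermediate values -/

section Sierpinski

variable {μ : Measure Ω}

/-- An atomless probability measure admits arbitrarily small positive-measure subsets. -/
lemma exists_small_subset [IsProbabilityMeasure μ] (hato : Atomless μ)
    {s : Set Ω} (hs : MeasurableSet s) (h0 : μ s ≠ 0) {ε : ℝ≥0∞} (hε : ε ≠ 0) :
    ∃ t, t ⊆ s ∧ MeasurableSet t ∧ 0 < μ t ∧ μ t ≤ ε := by
  have key : ∀ n : ℕ, ∃ t, t ⊆ s ∧ MeasurableSet t ∧ 0 < μ t ∧ μ t ≤ μ s * 2⁻¹ ^ n := by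
    intro n
    induction n with
    | zero => exact ⟨s, subset_rfl, hs, h0.bot_lt, by simp⟩
    | succ n ih =>
      obtain ⟨t, hts, htm, ht0, htle⟩ := ih
      obtain ⟨v, hvt, hvm, hv0, hvlt⟩ := hato t htm ht0.ne'
      have hsplit : μ v + μ (t \ v) = μ t := by
        have := measure_add_diff (μ := μ) hvm.nullMeasurableSet t
        rwa [Set.union_eq_self_of_subset_left hvt] at this
      have hfin : μ t ≠ ⊤ := measure_ne_top μ t
      have hdpos : 0 < μ (t \ v) := by
        rcases eq_or_ne (μ (t \ v)) 0 with h | h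
        · exfalso
          rw [h, add_zero] at hsplit
          exact absurd hsplit (ne_of_lt hvlt)
        · exact h.bot_lt
      -- one of the two halves has measure ≤ μ t / 2
      have hone : μ v ≤ μ t / 2 ∨ μ (t \ v) ≤ μ t / 2 := by
        by_contra hcon
        push_neg at hcon
        have : μ t < μ v + μ (t \ v) := by
          calc μ t = μ t / 2 + μ t / 2 := (ENNReal.add_halves _).symm
            _ < μ v + μ (t \ v) :=
              ENNReal.add_lt_add hcon.1 hcon.2
        rw [hsplit] at this
        exact absurd this (lt_irrefl _)
      have hhalf : μ t / 2 ≤ μ s * 2⁻¹ ^ (n + 1) := by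
        rw [pow_succ, ← mul_assoc]
        rw [ENNReal.div_eq_inv_mul, mul_comm]
        exact mul_le_mul_left htle _
      rcases hone with h | h
      · exact ⟨v, hvt.trans hts, hvm, hv0, h.trans hhalf⟩
      · exact ⟨t \ v, (Set.diff_subset).trans hts, htm.diff hvm, hdpos, h.trans hhalf⟩
  -- choose n with μ s * 2⁻¹ ^ n ≤ ε
  obtain ⟨n, hn⟩ : ∃ n : ℕ, μ s * 2⁻¹ ^ n ≤ ε := by
    obtain ⟨n, hn⟩ := ENNReal.exists_inv_two_pow_lt hε
    refine ⟨n, le_trans ?_ hn.le⟩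
    calc μ s * 2⁻¹ ^ n ≤ 1 * 2⁻¹ ^ n := mul_le_mul_left prob_le_one _
      _ = 2⁻¹ ^ n := one_mul _
  obtain ⟨t, h1, h2, h3, h4⟩ := key n
  exact ⟨t, h1, h2, h3, h4.trans hn⟩

/-- Sierpiński's theorem: an atomless probability measure attains every value
below the measure of a given measurable set. -/
lemma sierpinski [IsProbabilityMeasure μ] (hato : Atomless μ)
    {s : Set Ω} (hs : MeasurableSet s) {r : ℝ≥0∞} (hr : r ≤ μ s) :
    ∃ t, t ⊆ s ∧ MeasurableSet t ∧ μ t = r := by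
  rcases eq_or_lt_of_le hr with hr' | hr'
  · exact ⟨s, subset_rfl, hs, hr'.symm⟩
  -- greedy construction
  have key : ∀ t : Set Ω, MeasurableSet t → t ⊆ s → μ t < r →
      ∃ v, MeasurableSet v ∧ v ⊆ s \ t ∧ 0 < μ v ∧ μ t + μ v ≤ r ∧
        ∀ w, MeasurableSet w → w ⊆ s \ t → μ w ≤ r - μ t → μ w ≤ 2 * μ v := by
    intro t htm hts htr
    set P : Set Ω → Prop := fun w => MeasurableSet w ∧ w ⊆ s \ t ∧ μ w ≤ r - μ t with hP
    have hne : 0 < μ (s \ t) := by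
      have : μ (s \ t) = μ s - μ t := measure_diff hts htm.nullMeasurableSet
        (measure_ne_top μ t)
      rw [this]
      exact tsub_pos_of_lt (htr.trans_le hr)
    obtain ⟨w0, hw0s, hw0m, hw00, hw0le⟩ :=
      exists_small_subset hato (hs.diff htm) hne.ne' (ε := r - μ t)
        (tsub_pos_of_lt htr).ne'
    set c : ℝ≥0∞ := ⨆ w : {w : Set Ω // P w}, μ w.1 with hc
    have hcpos : 0 < c := lt_of_lt_of_le hw00 (le_iSup (fun w : {w : Set Ω // P w} => μ w.1)
      ⟨w0, hw0m, hw0s, hw0le⟩)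
    have hcle : c ≤ 1 := by
      refine iSup_le (fun w => ?_)
      exact prob_le_one
    have hchalf : c / 2 < c := ENNReal.half_lt_self hcpos.ne' (lt_of_le_of_lt hcle (by norm_num)).ne
    obtain ⟨⟨v, hvP⟩, hv⟩ := lt_iSup_iff.mp hchalf
    refine ⟨v, hvP.1, hvP.2.1, ?_, ?_, ?_⟩
    · exact lt_of_le_of_lt zero_le hv
    · have := hvP.2.2
      calc μ t + μ v ≤ μ t + (r - μ t) := add_le_add_right this _
        _ = r := add_tsub_cancel_of_le htr.le
    · intro w hwm hws hwle
      have hwc : μ w ≤ c := le_iSup (fun w : {w : Set Ω // P w} => μ w.1) ⟨w, hwm, hws, hwle⟩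
      calc μ w ≤ c := hwc
        _ ≤ 2 * (c / 2) := by
            rw [ENNReal.mul_div_cancel'] <;> norm_num
        _ ≤ 2 * μ v := mul_le_mul_right hv.le _
  classical
  -- build the increasing sequence of sets
  let step : {t : Set Ω // MeasurableSet t ∧ t ⊆ s ∧ μ t ≤ r} →
      {t : Set Ω // MeasurableSet t ∧ t ⊆ s ∧ μ t ≤ r} := fun t =>
    if h : μ t.1 < r then
      let v := (key t.1 t.2.1 t.2.2.1 h).choose
      have hv := (key t.1 t.2.1 t.2.2.1 h).choose_spec
      ⟨t.1 ∪ v, t.2.1.union hv.1, Set.union_subset t.2.2.1 (hv.2.1.trans Set.diff_subset),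
        le_trans (measure_union_le _ _) hv.2.2.2.1⟩
    else t
  let T : ℕ → {t : Set Ω // MeasurableSet t ∧ t ⊆ s ∧ μ t ≤ r} := fun n =>
    step^[n] ⟨∅, MeasurableSet.empty, Set.empty_subset s, by simp⟩
  have hmono : ∀ n, (T n).1 ⊆ (T (n + 1)).1 := by
    intro n
    have : T (n + 1) = step (T n) := Function.iterate_succ_apply' _ _ _
    rw [this]
    by_cases h : μ (T n).1 < r
    · simp only [step, dif_pos h]
      exact Set.subset_union_left
    · simp only [step, dif_neg h]
      exact subset_rfl
  have hmono' : Monotone (fun n => (T n).1) := monotone_nat_of_le_succ hmono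
  set tinf : Set Ω := ⋃ n, (T n).1 with htinf
  have htinfm : MeasurableSet tinf := MeasurableSet.iUnion (fun n => (T n).2.1)
  have htinfs : tinf ⊆ s := Set.iUnion_subset (fun n => (T n).2.2.1)
  have htinfμ : μ tinf = ⨆ n, μ (T n).1 :=
    (hmono'.directed_le).measure_iUnion
  have htinfle : μ tinf ≤ r := by
    rw [htinfμ]; exact iSup_le (fun n => (T n).2.2.2)
  refine ⟨tinf, htinfs, htinfm, ?_⟩
  by_contra hne
  have hlt : μ tinf < r := lt_of_le_of_ne htinfle hne
  -- all partial sets have measure < r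
  have hTlt : ∀ n, μ (T n).1 < r := fun n =>
    lt_of_le_of_lt (measure_mono (Set.subset_iUnion (fun n => (T n).1) n)) hlt
  -- find a positive chunk below the whole union
  have hstd : 0 < μ (s \ tinf) := by
    have : μ (s \ tinf) = μ s - μ tinf := measure_diff htinfs htinfm.nullMeasurableSet
      (measure_ne_top μ tinf)
    rw [this]; exact tsub_pos_of_lt (hlt.trans_le hr)
  obtain ⟨w, hws, hwm, hw0, hwle⟩ :=
    exists_small_subset hato (hs.diff htinfm) hstd.ne' (ε := r - μ tinf)
      (tsub_pos_of_lt hlt).ne'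
  -- each step adds at least μ w / 2
  have hstep : ∀ n, μ (T n).1 + μ w / 2 ≤ μ (T (n + 1)).1 := by
    intro n
    have hTn := hTlt n
    have hv := (key (T n).1 (T n).2.1 (T n).2.2.1 hTn).choose_spec
    set v := (key (T n).1 (T n).2.1 (T n).2.2.1 hTn).choose
    have hTsucc : (T (n + 1)).1 = (T n).1 ∪ v := by
      have : T (n + 1) = step (T n) := Function.iterate_succ_apply' _ _ _
      rw [this]
      simp only [step, dif_pos hTn]
      rfl
    have hwv : μ w ≤ 2 * μ v := by
      refine hv.2.2.2.2 w hwm ?_ ?_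
      · refine hws.trans (Set.diff_subset_diff_right ?_)
        exact Set.subset_iUnion (fun n => (T n).1) n
      · refine hwle.trans ?_
        exact tsub_le_tsub_left (measure_mono (Set.subset_iUnion (fun n => (T n).1) n)) r
    have hw2v : μ w / 2 ≤ μ v := by
      rw [ENNReal.div_le_iff (by norm_num) (by norm_num)]
      rwa [mul_comm] at hwv
    have hdisj : Disjoint (T n).1 v := by
      have : v ⊆ s \ (T n).1 := hv.2.1
      exact Set.disjoint_of_subset_right this disjoint_sdiff_self_right
    rw [hTsucc, measure_union hdisj hv.1]
    exact add_le_add_right hw2v _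
  have hlower : ∀ n : ℕ, (n : ℝ≥0∞) * (μ w / 2) ≤ μ (T n).1 := by
    intro n
    induction n with
    | zero => simp
    | succ n ih =>
      calc ((n + 1 : ℕ) : ℝ≥0∞) * (μ w / 2) = (n : ℝ≥0∞) * (μ w / 2) + μ w / 2 := by
            push_cast; ring
        _ ≤ μ (T n).1 + μ w / 2 := add_le_add_left ih _
        _ ≤ μ (T (n + 1)).1 := hstep n
  -- contradiction with boundedness
  have hw2 : (0 : ℝ≥0∞) < μ w / 2 := ENNReal.div_pos hw0.ne' (by norm_num)
  obtain ⟨n, hn⟩ := ENNReal.exists_nat_gt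
    (ENNReal.div_lt_top (lt_of_le_of_lt hr (measure_lt_top μ s)).ne hw2.ne').ne
  have hwtop : μ w / 2 ≠ ⊤ := (lt_of_le_of_lt (by
    calc μ w / 2 ≤ μ w := ENNReal.half_le_self
      _ ≤ 1 := prob_le_one) (by norm_num)).ne
  have hle : r ≤ (n : ℝ≥0∞) * (μ w / 2) := by
    calc r = r / (μ w / 2) * (μ w / 2) := (ENNReal.div_mul_cancel hw2.ne' hwtop).symm
      _ ≤ (n : ℝ≥0∞) * (μ w / 2) := mul_le_mul_left hn.le _
  exact absurd ((hTlt n).trans_le (hle.trans (hlower n))) (lt_irrefl _)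

end Sierpinski

/-! ### Swapping construction -/

section Swap

variable {μ : Measure Ω}

lemma measure_triple_split {s t u : Set Ω} (hs : MeasurableSet s) (ht : MeasurableSet t)
    (hdisj : Disjoint s t) :
    μ u = μ (u ∩ s) + μ (u ∩ t) + μ (u ∩ (s ∪ t)ᶜ) := by
  have h1 : μ (u ∩ s) + μ (u \ s) = μ u := measure_inter_add_diff u hs
  have h2 : μ ((u \ s) ∩ t) + μ ((u \ s) \ t) = μ (u \ s) := measure_inter_add_diff (u \ s) ht
  have e1 : (u \ s) ∩ t = u ∩ t := by
    have ht' : sᶜ ∩ t = t := Set.inter_eq_self_of_subset_right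
      (fun x hx => Set.disjoint_right.mp hdisj hx)
    rw [Set.diff_eq, Set.inter_assoc, ht']
  have e2 : (u \ s) \ t = u ∩ (s ∪ t)ᶜ := by
    rw [Set.diff_diff, Set.diff_eq]
  rw [← h1, ← h2, e1, e2]
  ring

open scoped Classical in
/-- Swapping two constant values on disjoint sets of equal measure preserves the law. -/
lemma identDistrib_swap {s t : Set Ω} (hs : MeasurableSet s) (ht : MeasurableSet t)
    (hdisj : Disjoint s t) (hμst : μ s = μ t) {h : Ω → ℝ} (hh : Measurable h) (a b : ℝ) :
    ProbabilityTheory.IdentDistrib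
      (s.piecewise (fun _ => a) (t.piecewise (fun _ => b) h))
      (s.piecewise (fun _ => b) (t.piecewise (fun _ => a) h)) μ μ := by
  classical
  set f := s.piecewise (fun _ => a) (t.piecewise (fun _ => b) h) with hf
  set g := s.piecewise (fun _ => b) (t.piecewise (fun _ => a) h) with hg
  have hfm : Measurable f := Measurable.piecewise hs measurable_const
    (Measurable.piecewise ht measurable_const hh)
  have hgm : Measurable g := Measurable.piecewise hs measurable_const
    (Measurable.piecewise ht measurable_const hh)
  refine ⟨hfm.aemeasurable, hgm.aemeasurable, ?_⟩
  refine Measure.ext (fun E hE => ?_)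
  rw [Measure.map_apply hfm hE, Measure.map_apply hgm hE]
  have hfs : f ⁻¹' E ∩ s = if a ∈ E then s else ∅ := by
    ext ω
    by_cases hω : ω ∈ s <;> by_cases ha : a ∈ E <;>
      simp [f, Set.piecewise_eq_of_mem _ _ _ , hω, ha, Set.piecewise] at * <;> tauto
  have hgs : g ⁻¹' E ∩ s = if b ∈ E then s else ∅ := by
    ext ω
    by_cases hω : ω ∈ s <;> by_cases hb : b ∈ E <;>
      simp [g, Set.piecewise, hω, hb] <;> tauto
  have hft : f ⁻¹' E ∩ t = if b ∈ E then t else ∅ := by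
    ext ω
    have : ω ∈ t → ω ∉ s := fun hω => Set.disjoint_right.mp hdisj hω
    by_cases hω : ω ∈ t <;> by_cases hb : b ∈ E <;>
      simp [f, Set.piecewise, hω, hb, this] <;> tauto
  have hgt : g ⁻¹' E ∩ t = if a ∈ E then t else ∅ := by
    ext ω
    have : ω ∈ t → ω ∉ s := fun hω => Set.disjoint_right.mp hdisj hω
    by_cases hω : ω ∈ t <;> by_cases ha : a ∈ E <;>
      simp [g, Set.piecewise, hω, ha, this] <;> tauto
  have hrest : f ⁻¹' E ∩ (s ∪ t)ᶜ = g ⁻¹' E ∩ (s ∪ t)ᶜ := by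
    ext ω
    simp only [Set.mem_inter_iff, Set.mem_compl_iff, Set.mem_union]
    constructor <;> rintro ⟨h1, h2⟩ <;> push_neg at h2 <;>
      refine ⟨?_, by tauto⟩ <;>
      simpa [f, g, Set.piecewise, h2.1, h2.2] using h1
  rw [measure_triple_split (u := f ⁻¹' E) hs ht hdisj,
    measure_triple_split (u := g ⁻¹' E) hs ht hdisj, hfs, hgs, hft, hgt, hrest]
  by_cases ha : a ∈ E <;> by_cases hb : b ∈ E <;> simp [ha, hb, hμst] <;> ring

/-- Rearrangement: given an integrable `V` with positive probability of being negative
and a set `A` of positive measure, there are `V₁ ~ Vh ≥ V` with `V₁` negative on a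
positive-measure subset of `A`. -/
lemma exists_rearranged [IsProbabilityMeasure μ] (hato : Atomless μ)
    {V : Ω → ℝ} (hVm : Measurable V) (hVi : Integrable V μ)
    (hVneg : 0 < μ {ω | V ω < 0}) {A : Set Ω} (hA : MeasurableSet A) (hA0 : 0 < μ A) :
    ∃ V₁ Vh : Ω → ℝ, Measurable V₁ ∧ Measurable Vh ∧ Integrable V₁ μ ∧ Integrable Vh μ ∧
      (∀ ω, V ω ≤ Vh ω) ∧ ProbabilityTheory.IdentDistrib V₁ Vh μ μ ∧
      0 < μ (A ∩ {ω | V₁ ω < 0}) := by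
  classical
  by_cases hc : 0 < μ (A ∩ {ω | V ω < 0})
  · exact ⟨V, V, hVm, hVm, hVi, hVi, fun ω => le_rfl,
      ProbabilityTheory.IdentDistrib.refl hVm.aemeasurable, hc⟩
  push_neg at hc
  have hneg_meas : MeasurableSet {ω | V ω < 0} := hVm measurableSet_Iio
  have hc0 : μ (A ∩ {ω | V ω < 0}) = 0 := nonpos_iff_eq_zero.mp hc
  have h2 : 0 < μ ({ω | V ω < 0} ∩ Aᶜ) := by
    have hsplit : μ ({ω | V ω < 0} ∩ A) + μ ({ω | V ω < 0} \ A) = μ {ω | V ω < 0} :=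
      measure_inter_add_diff _ hA
    have hz : μ ({ω | V ω < 0} ∩ A) = 0 := by rw [Set.inter_comm]; exact hc0
    rw [hz, zero_add, Set.diff_eq] at hsplit
    rw [hsplit]
    exact hVneg
  -- find ε > 0 with positive measure of {V ≤ -ε} ∩ Aᶜ
  obtain ⟨n, hn⟩ : ∃ n : ℕ, 0 < μ ({ω | V ω ≤ -(1 / (n + 1))} ∩ Aᶜ) := by
    by_contra hall
    push_neg at hall
    have hcover : {ω | V ω < 0} ∩ Aᶜ ⊆ ⋃ n : ℕ, ({ω | V ω ≤ -(1 / (n + 1 : ℝ))} ∩ Aᶜ) := by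
      rintro ω ⟨hω, hωA⟩
      obtain ⟨n, hn⟩ := exists_nat_one_div_lt (show (0:ℝ) < -V ω by simpa using hω)
      exact Set.mem_iUnion.mpr ⟨n, ⟨by simp only [Set.mem_setOf_eq]; linarith, hωA⟩⟩
    have : μ ({ω | V ω < 0} ∩ Aᶜ) = 0 :=
      measure_mono_null hcover (measure_iUnion_null (fun n => nonpos_iff_eq_zero.mp (hall n)))
    exact absurd this h2.ne'
  set ε : ℝ := 1 / (n + 1) with hε
  have hεpos : 0 < ε := by positivity
  -- find M with positive measure of A ∩ {|V| ≤ M}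
  obtain ⟨M, hM⟩ : ∃ M : ℕ, 0 < μ (A ∩ {ω | |V ω| ≤ M}) := by
    by_contra hall
    push_neg at hall
    have hcover : A ⊆ ⋃ M : ℕ, (A ∩ {ω | |V ω| ≤ M}) := by
      intro ω hω
      obtain ⟨M, hM⟩ := exists_nat_ge (|V ω|)
      exact Set.mem_iUnion.mpr ⟨M, hω, hM⟩
    have : μ A = 0 := measure_mono_null hcover
      (measure_iUnion_null (fun M => nonpos_iff_eq_zero.mp (hall M)))
    exact absurd this hA0.ne'
  set D : Set Ω := {ω | V ω ≤ -ε} ∩ Aᶜ with hD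
  set A' : Set Ω := A ∩ {ω | |V ω| ≤ M} with hA'
  have hDm : MeasurableSet D := (hVm measurableSet_Iic).inter hA.compl
  have hA'm : MeasurableSet A' := hA.inter ((hVm.abs) measurableSet_Iic)
  set δ : ℝ≥0∞ := min (μ D) (μ A') with hδ
  have hδpos : 0 < δ := lt_min hn hM
  obtain ⟨D₂, hD₂D, hD₂m, hD₂μ⟩ := sierpinski hato hDm (min_le_left _ _)
  obtain ⟨A₂, hA₂A, hA₂m, hA₂μ⟩ := sierpinski hato hA'm (min_le_right _ _)
  have hdisj : Disjoint D₂ A₂ :=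
    Set.disjoint_of_subset (hD₂D.trans Set.inter_subset_right)
      (hA₂A.trans Set.inter_subset_left) disjoint_compl_left
  set Vh : Ω → ℝ := D₂.piecewise (fun _ => -ε) (A₂.piecewise (fun _ => (M : ℝ)) V) with hVh
  set V₁ : Ω → ℝ := D₂.piecewise (fun _ => (M : ℝ)) (A₂.piecewise (fun _ => -ε) V) with hV₁
  have hVhm : Measurable Vh := Measurable.piecewise hD₂m measurable_const
    (Measurable.piecewise hA₂m measurable_const hVm)
  have hV₁m : Measurable V₁ := Measurable.piecewise hD₂m measurable_const
    (Measurable.piecewise hA₂m measurable_const hVm)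
  have hVhi : Integrable Vh μ := by
    refine Integrable.piecewise hD₂m ((integrable_const _).integrableOn) ?_
    exact (Integrable.piecewise hA₂m ((integrable_const _).integrableOn)
      hVi.integrableOn).integrableOn
  have hV₁i : Integrable V₁ μ := by
    refine Integrable.piecewise hD₂m ((integrable_const _).integrableOn) ?_
    exact (Integrable.piecewise hA₂m ((integrable_const _).integrableOn)
      hVi.integrableOn).integrableOn
  have hle : ∀ ω, V ω ≤ Vh ω := by
    intro ω
    by_cases h1 : ω ∈ D₂
    · have : V ω ≤ -ε := (hD₂D h1).1
      simpa [Vh, Set.piecewise, h1] using this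
    by_cases h2 : ω ∈ A₂
    · have : |V ω| ≤ M := (hA₂A h2).2
      have := (abs_le.mp this).2
      simpa [Vh, Set.piecewise, h1, h2] using this
    · simp [Vh, Set.piecewise, h1, h2]
  have hid : ProbabilityTheory.IdentDistrib V₁ Vh μ μ := by
    have := identDistrib_swap (μ := μ) hD₂m hA₂m hdisj (by rw [hD₂μ, hA₂μ]) hVm (M : ℝ) (-ε)
    exact this
  refine ⟨V₁, Vh, hV₁m, hVhm, hV₁i, hVhi, hle, hid, ?_⟩
  have hsub : A₂ ⊆ A ∩ {ω | V₁ ω < 0} := by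
    intro ω hω
    have hωD : ω ∉ D₂ := fun h => (Set.disjoint_left.mp hdisj h) hω
    refine ⟨(hA₂A hω).1, ?_⟩
    have : V₁ ω = -ε := by simp [V₁, Set.piecewise, hωD, hω]
    simp [Set.mem_setOf_eq, this]
    linarith
  calc (0 : ℝ≥0∞) < δ := hδpos
    _ = μ A₂ := hA₂μ.symm
    _ ≤ μ (A ∩ {ω | V₁ ω < 0}) := measure_mono hsub

end Swap

/-! ### Failure of weak well-posedness when neither functional is sensitive -/

section NotSens

variable {μ : Measure Ω}

lemma scale_scale (c l : ℝ) (Y : Ω → ℝ) : scale c (scale l Y) = scale (c * l) Y := by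
  funext ω; simp [scale]; ring

lemma exists_meas_rep {Y : Ω → ℝ} (hYi : Integrable Y μ) :
    ∃ Y' : Ω → ℝ, Measurable Y' ∧ Integrable Y' μ ∧ Y' =ᵐ[μ] Y :=
  ⟨hYi.1.mk Y, hYi.1.measurable_mk, hYi.congr hYi.1.ae_eq_mk, hYi.1.ae_eq_mk.symm⟩

lemma measure_neg_congr {Y Y' : Ω → ℝ} (h : Y' =ᵐ[μ] Y) :
    μ {ω | Y' ω < 0} = μ {ω | Y ω < 0} := by
  refine measure_congr ?_
  filter_upwards [h] with ω hω
  change (Y' ω < 0) = (Y ω < 0)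
  rw [hω]

lemma scale_ae_congr {Y Y' : Ω → ℝ} (l : ℝ) (h : Y' =ᵐ[μ] Y) :
    scale l Y' =ᵐ[μ] scale l Y := by
  filter_upwards [h] with ω hω
  simp [scale, hω]

/-- From failure of risk sensitivity at `Y` and positive star-shapedness,
the risk of every positive multiple of `Y` is nonpositive. -/
lemma R_nonpos_all {R : (Ω → ℝ) → EReal} (hps : PosStarShaped μ R)
    {Y : Ω → ℝ} (hYi : Integrable Y μ)
    (hY : ∀ l₀ : ℝ, 0 < l₀ → ∃ l, l₀ < l ∧ R (scale l Y) ≤ 0) :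
    ∀ l : ℝ, 0 < l → R (scale l Y) ≤ 0 := by
  intro l hl
  obtain ⟨l', hll', hRl'⟩ := hY l hl
  have hc : 1 < l' / l := (one_lt_div hl).mpr hll'
  have hmul := hps (scale l Y) (integrable_scale l hYi) (l' / l) hc
  rw [scale_scale, div_mul_cancel₀ _ hl.ne'] at hmul
  exact EReal.le_zero_of_mul_le (by positivity) (hmul.trans hRl') le_rfl

/-- A single position `Z` whose scalings exhaust the utility while having nonpositive
risk destroys weak well-posedness. -/
lemma not_weak_of_witness [IsProbabilityMeasure μ] {U R : (Ω → ℝ) → EReal}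
    (hU : IsUtility μ U) (hR : IsRisk μ R)
    {Z : Ω → ℝ} (hZi : Integrable Z μ)
    (hZneg : 0 < μ {ω | Z ω < 0})
    (hUZ : limConst U ≤ Filter.limsup (fun l : ℝ => U (scale l Z)) atTop)
    (hRZ : ∀ l : ℝ, 0 < l → R (scale l Z) ≤ 0) :
    ¬ MIWeaklyWellPosed μ U R := by
  intro hweak
  set X : Fin 1 → Ω → ℝ := fun _ => Z with hX
  have hport : ∀ π : Fin 1 → ℝ, port X π = scale (π 0) Z := by
    intro π; funext ω; simp [port, scale, X, Fin.sum_univ_one]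
  -- Z must be positive with positive probability
  have hZpos : 0 < μ {ω | 0 < Z ω} := by
    by_contra hcon
    push_neg at hcon
    have hz : μ {ω | 0 < Z ω} = 0 := nonpos_iff_eq_zero.mp hcon
    have hae : ∀ᵐ ω ∂μ, Z ω ≤ 0 := by
      rw [ae_iff]
      convert hz using 2
      ext ω; simp [not_le]
    have hub : ∀ l : ℝ, 0 ≤ l → U (scale l Z) ≤ 0 := by
      intro l hl
      have hle : ∀ᵐ ω ∂μ, scale l Z ω ≤ (fun _ => (0:ℝ)) ω := by
        filter_upwards [hae] with ω hω
        exact mul_nonpos_of_nonneg_of_nonpos hl hω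
      have := hU.mono _ _ (integrable_scale l hZi) (integrable_const 0) hle
      rwa [hU.norm] at this
    have hls : Filter.limsup (fun l : ℝ => U (scale l Z)) atTop ≤ 0 := by
      refine limsup_le_of_le (by isBoundedDefault) ?_
      filter_upwards [eventually_ge_atTop (0:ℝ)] with l hl
      exact hub l hl
    exact absurd ((hUZ.trans hls).trans_lt (limConst_pos hU)) (lt_irrefl _)
  -- it is a market
  have hmkt : IsMarket μ X := by
    refine ⟨fun _ => hZi, ?_, ?_⟩
    · intro π hπ
      rw [hport] at hπ
      by_cases h0 : π 0 = 0
      · funext i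
        have : i = 0 := Subsingleton.elim _ _
        rw [this]; exact h0
      · exfalso
        have hz : ∀ᵐ ω ∂μ, Z ω = 0 := by
          filter_upwards [hπ] with ω hω
          have : π 0 * Z ω = 0 := hω
          rcases mul_eq_zero.mp this with h | h
          · exact absurd h h0
          · exact h
        have : μ {ω | Z ω < 0} = 0 := by
          rw [ae_iff] at hz
          refine measure_mono_null ?_ hz
          intro ω hω
          simp only [Set.mem_setOf_eq] at *
          exact ne_of_lt hω
        exact absurd this hZneg.ne'
    · rintro ⟨π, hπ1, hπ2⟩
      rw [hport] at hπ1 hπ2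
      rcases lt_trichotomy (π 0) 0 with h | h | h
      · have : ∀ᵐ ω ∂μ, Z ω ≤ 0 := by
          filter_upwards [hπ1] with ω hω
          by_contra hcon
          push_neg at hcon
          exact absurd (lt_of_lt_of_le (mul_neg_of_neg_of_pos h hcon) hω) (lt_irrefl _)
        have : μ {ω | 0 < Z ω} = 0 := by
          rw [ae_iff] at this
          refine measure_mono_null ?_ this
          intro ω hω
          simp only [Set.mem_setOf_eq, not_le] at *
          exact hω
        exact absurd this hZpos.ne'
      · have : {ω | 0 < scale (π 0) Z ω} = ∅ := by
          ext ω; simp [scale, h]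
        rw [this] at hπ2
        simp at hπ2
      · have : ∀ᵐ ω ∂μ, 0 ≤ Z ω := by
          filter_upwards [hπ1] with ω hω
          by_contra hcon
          push_neg at hcon
          exact absurd (lt_of_lt_of_le (mul_neg_of_pos_of_neg h hcon) hω) (lt_irrefl _)
        have : μ {ω | Z ω < 0} = 0 := by
          rw [ae_iff] at this
          refine measure_mono_null ?_ this
          intro ω hω
          simp only [Set.mem_setOf_eq, not_le] at *
          exact hω
        exact absurd this hZneg.ne'
  have hwk := hweak 1 Nat.one_pos X hmkt 0 le_rfl
  set S := ⨆ π : {π : Fin 1 → ℝ // R (port X π) ≤ ((0:ℝ) : EReal)}, U (port X π.1) with hS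
  have hmem : ∀ l : ℝ, 0 < l → U (scale l Z) ≤ S := by
    intro l hl
    have hcon : R (port X (fun _ => l)) ≤ ((0:ℝ) : EReal) := by
      rw [hport]
      simpa using hRZ l hl
    have := le_iSup (fun π : {π : Fin 1 → ℝ // R (port X π) ≤ ((0:ℝ) : EReal)} =>
      U (port X π.1)) ⟨fun _ => l, hcon⟩
    rwa [hport] at this
  have hsup : Filter.limsup (fun l : ℝ => U (scale l Z)) atTop ≤ S := by
    refine limsup_le_of_le (by isBoundedDefault) ?_
    filter_upwards [eventually_gt_atTop (0:ℝ)] with l hl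
    exact hmem l hl
  exact absurd ((hUZ.trans hsup).trans_lt hwk) (lt_irrefl _)

/-- If neither `U` nor `R` is sensitive to large losses, weak well-posedness fails
for some market. -/
lemma not_weak_of_not_sens [IsProbabilityMeasure μ] (hato : Atomless μ)
    {U R : (Ω → ℝ) → EReal} (hU : IsUtility μ U) (hR : IsRisk μ R)
    (hse : SensEquivUtility μ U) (hps : PosStarShaped μ R)
    (hlaw : LawInvariant μ U ∨ LawInvariant μ R)
    (hnU : ¬ SensLLUtility μ U) (hnR : ¬ SensLLRisk μ R) :
    ¬ MIWeaklyWellPosed μ U R := by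
  -- failure of weak sensitivity of U
  have hnW : ¬ WeakSensLLUtility μ U := fun h => hnU (hse.mp h)
  rw [WeakSensLLUtility] at hnW
  push_neg at hnW
  obtain ⟨Y₀, hY₀i, hY₀neg, hY₀lim⟩ := hnW
  -- failure of risk sensitivity
  rw [SensLLRisk] at hnR
  push_neg at hnR
  obtain ⟨W₀, hW₀i, hW₀neg, hW₀⟩ := hnR
  -- measurable representatives
  obtain ⟨YU, hYUm, hYUi, hYUae⟩ := exists_meas_rep hY₀i
  obtain ⟨YR, hYRm, hYRi, hYRae⟩ := exists_meas_rep hW₀i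
  have hYUneg : 0 < μ {ω | YU ω < 0} := by rwa [measure_neg_congr hYUae]
  have hYRneg : 0 < μ {ω | YR ω < 0} := by rwa [measure_neg_congr hYRae]
  have hYUlim : limConst U ≤ Filter.limsup (fun l : ℝ => U (scale l YU)) atTop := by
    have : (fun l : ℝ => U (scale l YU)) = fun l : ℝ => U (scale l Y₀) := by
      funext l
      exact U_congr hU.mono (integrable_scale l hYUi) (integrable_scale l hY₀i)
        (scale_ae_congr l hYUae)
    rw [this]; exact hY₀lim
  have hYRle : ∀ l : ℝ, 0 < l → R (scale l YR) ≤ 0 := by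
    refine R_nonpos_all hps hYRi ?_
    intro l₀ hl₀
    obtain ⟨l, hll, hRl⟩ := hW₀ l₀ hl₀
    refine ⟨l, hll, ?_⟩
    rw [R_congr hR.mono (integrable_scale l hYRi) (integrable_scale l hW₀i)
      (scale_ae_congr l hYRae)]
    exact hRl
  -- the two law-invariance cases
  rcases hlaw with hlawU | hlawR
  · -- rearrange YU into the negativity region of YR
    have hA : MeasurableSet {ω | YR ω < 0} := hYRm measurableSet_Iio
    obtain ⟨V₁, Vh, hV₁m, hVhm, hV₁i, hVhi, hVle, hVid, hVneg⟩ :=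
      exists_rearranged hato hYUm hYUi hYUneg hA hYRneg
    set Z : Ω → ℝ := fun ω => max (V₁ ω) (YR ω) with hZ
    have hZi : Integrable Z μ := hV₁i.sup hYRi
    have hZneg : 0 < μ {ω | Z ω < 0} := by
      have : {ω | YR ω < 0} ∩ {ω | V₁ ω < 0} = {ω | Z ω < 0} := by
        ext ω; simp [Z, max_lt_iff, and_comm]
      rwa [this] at hVneg
    refine not_weak_of_witness hU hR hZi hZneg ?_ ?_
    · refine hYUlim.trans (limsup_le_limsup ?_ (by isBoundedDefault) (by isBoundedDefault))
      filter_upwards [eventually_gt_atTop (0:ℝ)] with l hl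
      calc U (scale l YU) ≤ U (scale l Vh) := by
            refine hU.mono _ _ (integrable_scale l hYUi) (integrable_scale l hVhi) ?_
            exact Eventually.of_forall (fun ω => mul_le_mul_of_nonneg_left (hVle ω) hl.le)
        _ = U (scale l V₁) := by
            refine (hlawU _ _ (integrable_scale l hV₁i) (integrable_scale l hVhi) ?_).symm
            exact hVid.comp (measurable_const_mul l)
        _ ≤ U (scale l Z) := by
            refine hU.mono _ _ (integrable_scale l hV₁i) (integrable_scale l hZi) ?_
            exact Eventually.of_forall (fun ω => mul_le_mul_of_nonneg_left
              (le_max_left _ _) hl.le)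
    · intro l hl
      have h1 : R (scale l Z) ≤ R (scale l YR) := by
        refine hR.mono _ _ (integrable_scale l hYRi) (integrable_scale l hZi) ?_
        exact Eventually.of_forall (fun ω => mul_le_mul_of_nonneg_left
          (le_max_right _ _) hl.le)
      exact h1.trans (hYRle l hl)
  · -- rearrange YR into the negativity region of YU
    have hA : MeasurableSet {ω | YU ω < 0} := hYUm measurableSet_Iio
    obtain ⟨V₁, Vh, hV₁m, hVhm, hV₁i, hVhi, hVle, hVid, hVneg⟩ :=
      exists_rearranged hato hYRm hYRi hYRneg hA hYUneg
    set Z : Ω → ℝ := fun ω => max (YU ω) (V₁ ω) with hZ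
    have hZi : Integrable Z μ := hYUi.sup hV₁i
    have hZneg : 0 < μ {ω | Z ω < 0} := by
      have : {ω | YU ω < 0} ∩ {ω | V₁ ω < 0} = {ω | Z ω < 0} := by
        ext ω; simp [Z, max_lt_iff]
      rwa [this] at hVneg
    refine not_weak_of_witness hU hR hZi hZneg ?_ ?_
    · refine hYUlim.trans (limsup_le_limsup ?_ (by isBoundedDefault) (by isBoundedDefault))
      filter_upwards [eventually_gt_atTop (0:ℝ)] with l hl
      refine hU.mono _ _ (integrable_scale l hYUi) (integrable_scale l hZi) ?_
      exact Eventually.of_forall (fun ω => mul_le_mul_of_nonneg_left (le_max_left _ _) hl.le)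
    · intro l hl
      calc R (scale l Z) ≤ R (scale l V₁) := by
            refine hR.mono _ _ (integrable_scale l hV₁i) (integrable_scale l hZi) ?_
            exact Eventually.of_forall (fun ω => mul_le_mul_of_nonneg_left
              (le_max_right _ _) hl.le)
        _ = R (scale l Vh) := by
            refine hlawR _ _ (integrable_scale l hV₁i) (integrable_scale l hVhi) ?_
            exact hVid.comp (measurable_const_mul l)
        _ ≤ R (scale l YR) := by
            refine hR.mono _ _ (integrable_scale l hYRi) (integrable_scale l hVhi) ?_
            exact Eventually.of_forall (fun ω => mul_le_mul_of_nonneg_left (hVle ω) hl.le)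
        _ ≤ 0 := hYRle l hl

end NotSens

/-! ### Well-posedness under sensitivity to large losses -/

section WellPosed

open scoped Topology

variable {μ : Measure Ω}

lemma EReal.le_coe_div_of_mul_le {c : ℝ} (hc : 0 < c) {a : EReal} {b : ℝ}
    (h : (c : EReal) * a ≤ (b : EReal)) : a ≤ ((b / c : ℝ) : EReal) := by
  have hmul := mul_le_mul_of_nonneg_left h (by
    exact_mod_cast (inv_nonneg.mpr hc.le) : (0 : EReal) ≤ ((c⁻¹ : ℝ) : EReal))
  rw [← mul_assoc, ← EReal.coe_mul, inv_mul_cancel₀ hc.ne', EReal.coe_one, one_mul,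
    ← EReal.coe_mul] at hmul
  rwa [div_eq_inv_mul]

lemma measurable_port {d : ℕ} {X : Fin d → Ω → ℝ} (hXm : ∀ i, Measurable (X i))
    (π : Fin d → ℝ) : Measurable (port X π) :=
  Finset.measurable_sum _ (fun i _ => (hXm i).const_mul (π i))

lemma tendsto_port {d : ℕ} (X : Fin d → Ω → ℝ) {v : ℕ → Fin d → ℝ} {w : Fin d → ℝ}
    (h : Tendsto v atTop (𝓝 w)) (ω : Ω) :
    Tendsto (fun n => port X (v n) ω) atTop (𝓝 (port X w ω)) := by
  have hcoord : ∀ i, Tendsto (fun n => v n i) atTop (𝓝 (w i)) := fun i =>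
    (continuous_apply i).continuousAt.tendsto.comp h
  exact tendsto_finset_sum _ (fun i _ => (hcoord i).mul tendsto_const_nhds)

/-- Well-posedness for a single market with measurable components. -/
lemma wellposed_meas [IsProbabilityMeasure μ] {U R : (Ω → ℝ) → EReal}
    (hU : IsUtility μ U) (hR : IsRisk μ R)
    (huf : UpperFatou μ U) (hlf : LowerFatou μ R) (hps : PosStarShaped μ R)
    (hsens : SensLLUtility μ U ∨ SensLLRisk μ R)
    {d : ℕ} {X : Fin d → Ω → ℝ} (hXm : ∀ i, Measurable (X i))
    (hX : IsMarket μ X) : WellPosedFor U R X := by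
  intro Rmax hRmax
  have hXi : ∀ i, Integrable (X i) μ := hX.integrable
  set B : Ω → ℝ := fun ω => ∑ i, |X i ω| with hB
  have hBi : Integrable B μ := integrable_finset_sum _ (fun i _ => (hXi i).abs)
  have hBm : Measurable B := Finset.measurable_sum _ (fun i _ => (hXm i).abs)
  have hBnn : ∀ ω, 0 ≤ B ω := fun ω => Finset.sum_nonneg (fun i _ => abs_nonneg _)
  have hzero_mem : R (port X (0 : Fin d → ℝ)) ≤ (Rmax : EReal) := by
    rw [port_zero, hR.norm]
    exact_mod_cast hRmax
  set Img : Set EReal := (fun π => U (port X π)) '' {π | R (port X π) ≤ (Rmax : EReal)}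
    with hImg
  have hImgne : Img.Nonempty := ⟨U (port X 0), ⟨0, hzero_mem, rfl⟩⟩
  set s : EReal := sSup Img with hs
  have hs0 : (0 : EReal) ≤ s := by
    have : U (port X (0 : Fin d → ℝ)) = 0 := by rw [port_zero, hU.norm]
    exact this ▸ le_sSup ⟨0, hzero_mem, rfl⟩
  have hsle : ∀ π : Fin d → ℝ, R (port X π) ≤ (Rmax : EReal) → U (port X π) ≤ s :=
    fun π hπ => le_sSup ⟨π, hπ, rfl⟩
  obtain ⟨u, humono, hulim, humem⟩ := exists_seq_tendsto_sSup hImgne (OrderTop.bddAbove Img)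
  have hchoice : ∀ n, ∃ π : Fin d → ℝ, R (port X π) ≤ (Rmax : EReal) ∧ U (port X π) = u n :=
    fun n => by obtain ⟨π, hπ, hπ'⟩ := humem n; exact ⟨π, hπ, hπ'⟩
  choose π hπC hπU using hchoice
  by_cases hbdd : ∃ K : ℝ, ∀ n, ‖π n‖ ≤ K
  · -- bounded case: extract a convergent subsequence, optimum exists by Fatou
    obtain ⟨K, hK⟩ := hbdd
    have hK0 : (0:ℝ) ≤ K := le_trans (norm_nonneg _) (hK 0)
    obtain ⟨πs, -, φ, hφmono, hφlim⟩ :=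
      tendsto_subseq_of_bounded (Metric.isBounded_closedBall (x := (0 : Fin d → ℝ)) (r := K))
        (fun n => by simpa [Metric.mem_closedBall, dist_zero_right] using hK n)
    have hptw : ∀ᵐ ω ∂μ, Tendsto (fun j => port X (π (φ j)) ω) atTop (𝓝 (port X πs ω)) :=
      Eventually.of_forall (fun ω => tendsto_port X hφlim ω)
    have hZint : Integrable (fun ω => K * B ω) μ := hBi.const_mul K
    have hdom : ∀ j, ∀ᵐ ω ∂μ, |port X (π (φ j)) ω| ≤ K * B ω := by
      intro j
      refine Eventually.of_forall (fun ω => ?_)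
      refine (abs_port_le X (π (φ j)) ω).trans ?_
      exact mul_le_mul_of_nonneg_right (hK _) (hBnn ω)
    have hupper := huf (fun j => port X (π (φ j))) (port X πs) (fun ω => K * B ω)
      (fun j => integrable_port hXi _) (integrable_port hXi _) hZint hptw hdom
    have hlower := hlf (fun j => port X (π (φ j))) (port X πs) (fun ω => K * B ω)
      (fun j => integrable_port hXi _) (integrable_port hXi _) hZint hptw hdom
    have hUlim : Tendsto (fun j => U (port X (π (φ j)))) atTop (𝓝 s) := by
      have : (fun j => U (port X (π (φ j)))) = u ∘ φ := funext (fun j => hπU (φ j))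
      rw [this]
      exact hulim.comp hφmono.tendsto_atTop
    have hsU : s ≤ U (port X πs) := by
      have := hUlim.limsup_eq
      rw [← this]
      exact hupper
    have hRs : R (port X πs) ≤ (Rmax : EReal) := by
      refine hlower.trans ?_
      refine liminf_le_of_le (by isBoundedDefault) ?_
      intro b hb
      obtain ⟨j, hj⟩ := hb.exists
      exact hj.trans (hπC (φ j))
    exact ⟨πs, hRs, fun π' hπ' => (hsle π' hπ').trans hsU⟩
  · -- unbounded case
    push_neg at hbdd
    have hfreq : ∀ m : ℕ, ∃ᶠ n in atTop, (m + 1 : ℝ) ≤ ‖π n‖ := by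
      intro m
      rw [frequently_atTop]
      intro N
      set K : ℝ := (m + 1 : ℝ) + ∑ k ∈ Finset.range N, ‖π k‖ with hKdef
      obtain ⟨n, hn⟩ := hbdd K
      have hnN : N ≤ n := by
        by_contra hcon
        push_neg at hcon
        have h1 : ‖π n‖ ≤ ∑ k ∈ Finset.range N, ‖π k‖ :=
          Finset.single_le_sum (fun k _ => norm_nonneg (π k)) (Finset.mem_range.mpr hcon)
        have h2 : (0:ℝ) ≤ (m + 1 : ℝ) := by positivity
        linarith
      refine ⟨n, hnN, ?_⟩
      have : (0:ℝ) ≤ ∑ k ∈ Finset.range N, ‖π k‖ :=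
        Finset.sum_nonneg (fun k _ => norm_nonneg _)
      calc (m + 1 : ℝ) ≤ K := by linarith
        _ ≤ ‖π n‖ := hn.le
    obtain ⟨φ, hφmono, hφ⟩ := extraction_forall_of_frequently hfreq
    have hφpos : ∀ m, 0 < ‖π (φ m)‖ := fun m => lt_of_lt_of_le (by positivity) (hφ m)
    set σ : ℕ → Fin d → ℝ := fun m => ‖π (φ m)‖⁻¹ • π (φ m) with hσdef
    have hσnorm : ∀ m, ‖σ m‖ = 1 := by
      intro m
      rw [norm_smul, norm_inv, norm_norm, inv_mul_cancel₀ (hφpos m).ne']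
    obtain ⟨σs, hσs_mem, ψ, hψmono, hψlim⟩ :=
      (isCompact_sphere (0 : Fin d → ℝ) 1).tendsto_subseq
        (fun m => by simpa [Metric.mem_sphere, dist_zero_right] using hσnorm m)
    have hσs_norm : ‖σs‖ = 1 := by simpa [Metric.mem_sphere, dist_zero_right] using hσs_mem
    have hσs_ne : σs ≠ 0 := fun h => by simp [h] at hσs_norm
    set lam : ℕ → ℝ := fun m => ‖π (φ (ψ m))‖ with hlam
    have hlam_ge : ∀ m : ℕ, (m + 1 : ℝ) ≤ lam m := by
      intro m
      have h1 : (m : ℝ) ≤ (ψ m : ℝ) := Nat.cast_le.mpr hψmono.le_apply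
      have h2 := hφ (ψ m)
      push_cast at h2 ⊢
      linarith
    have hlam_pos : ∀ m, 0 < lam m := fun m => lt_of_lt_of_le (by positivity) (hlam_ge m)
    have hlam_top : Tendsto lam atTop atTop := by
      refine tendsto_atTop_mono hlam_ge ?_
      exact tendsto_atTop_add_const_right _ 1 tendsto_natCast_atTop_atTop
    have hdecomp : ∀ m, port X (π (φ (ψ m))) = scale (lam m) (port X (σ (ψ m))) := by
      intro m
      rw [← port_smul]
      congr 1
      rw [hσdef]
      rw [smul_smul, mul_inv_cancel₀ (hφpos (ψ m)).ne', one_smul]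
    have hptw : ∀ ω, Tendsto (fun m => port X (σ (ψ m)) ω) atTop (𝓝 (port X σs ω)) :=
      fun ω => tendsto_port X hψlim ω
    have hdom1 : ∀ ξ : Fin d → ℝ, ‖ξ‖ = 1 → ∀ ω, |port X ξ ω| ≤ B ω := by
      intro ξ hξ ω
      have := abs_port_le X ξ ω
      rwa [hξ, one_mul] at this
    -- the limit direction must have losses
    have hneg : 0 < μ {ω | port X σs ω < 0} := by
      by_contra hcon
      push_neg at hcon
      have hz : μ {ω | port X σs ω < 0} = 0 := nonpos_iff_eq_zero.mp hcon
      have hge : ∀ᵐ ω ∂μ, 0 ≤ port X σs ω := by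
        rw [ae_iff]
        convert hz using 2
        ext ω; simp [not_le]
      have hnopos : μ {ω | 0 < port X σs ω} = 0 := by
        by_contra hcon2
        exact hX.no_arbitrage ⟨σs, hge, zero_le.lt_of_ne (Ne.symm hcon2)⟩
      have hzero : ∀ᵐ ω ∂μ, port X σs ω = 0 := by
        have hle : ∀ᵐ ω ∂μ, port X σs ω ≤ 0 := by
          rw [ae_iff]
          refine measure_mono_null ?_ hnopos
          intro ω hω
          simpa [not_le] using hω
        filter_upwards [hge, hle] with ω h1 h2
        exact le_antisymm h2 h1
      exact hσs_ne (hX.nonredundant σs hzero)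
    rcases hsens with hsU | hsR
    · -- utility sensitivity: the supremum is 0, attained at 0
      -- build the dominating sequence of envelopes
      set f : ℕ → Ω → ℝ := fun k => port X (σ (ψ k)) with hf
      have hfm : ∀ k, Measurable (f k) := fun k => measurable_port hXm _
      have hfb : ∀ k ω, |f k ω| ≤ B ω := fun k ω => hdom1 _ (hσnorm (ψ k)) ω
      set W : ℕ → Ω → ℝ := fun m ω => max (port X σs ω) (⨆ k : ℕ, f (m + k) ω) with hW
      have hbdd_range : ∀ m ω, BddAbove (Set.range fun k => f (m + k) ω) := by
        intro m ω
        refine ⟨B ω, ?_⟩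
        rintro x ⟨k, rfl⟩
        exact (abs_le.mp (hfb (m + k) ω)).2
      have hWm : ∀ m, Measurable (W m) := by
        intro m
        exact (measurable_port hXm σs).max (Measurable.iSup (fun k => hfm (m + k)))
      have hWub : ∀ m ω, W m ω ≤ B ω := by
        intro m ω
        refine max_le ?_ ?_
        · exact (abs_le.mp (hdom1 σs hσs_norm ω)).2
        · exact ciSup_le (fun k => (abs_le.mp (hfb (m + k) ω)).2)
      have hWlb : ∀ m ω, -B ω ≤ W m ω := by
        intro m ω
        exact le_trans (abs_le.mp (hdom1 σs hσs_norm ω)).1 (le_max_left _ _)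
      have hWi : ∀ m, Integrable (W m) μ := by
        intro m
        refine Integrable.mono' hBi (hWm m).aestronglyMeasurable ?_
        refine Eventually.of_forall (fun ω => ?_)
        rw [Real.norm_eq_abs, abs_le]
        exact ⟨hWlb m ω, hWub m ω⟩
      have hWge : ∀ m k, m ≤ k → ∀ ω, f k ω ≤ W m ω := by
        intro m k hmk ω
        have : f k ω = f (m + (k - m)) ω := by rw [Nat.add_sub_cancel' hmk]
        rw [this]
        exact le_trans (le_ciSup (hbdd_range m ω) (k - m)) (le_max_right _ _)
      -- some envelope has positive probability of loss
      have hWneg : ∃ m, 0 < μ {ω | W m ω < 0} := by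
        by_contra hcon
        push_neg at hcon
        have hcover : {ω | port X σs ω < 0} ⊆ ⋃ m, {ω | W m ω < 0} := by
          intro ω hω
          simp only [Set.mem_setOf_eq] at hω
          have hconv := hptw ω
          obtain ⟨m₀, hm₀⟩ := (Metric.tendsto_atTop.mp hconv) (-(port X σs ω) / 2)
            (by linarith)
          refine Set.mem_iUnion.mpr ⟨m₀, ?_⟩
          simp only [Set.mem_setOf_eq, hW]
          refine max_lt hω ?_
          refine lt_of_le_of_lt (ciSup_le (fun k => ?_)) (show port X σs ω / 2 < 0 by linarith)
          have := hm₀ (m₀ + k) (Nat.le_add_right _ _)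
          rw [Real.dist_eq, abs_lt] at this
          have h2 := this.2
          simp only [hf] at *
          linarith
        have : μ {ω | port X σs ω < 0} = 0 :=
          measure_mono_null hcover
            (measure_iUnion_null (fun m => nonpos_iff_eq_zero.mp (hcon m)))
        exact absurd this hneg.ne'
      obtain ⟨m₀, hm₀neg⟩ := hWneg
      obtain ⟨l₀, hl₀pos, hl₀⟩ := hsU (W m₀) (hWi m₀) hm₀neg
      -- eventually the maximizing utilities are < 0
      have hUneg : ∀ᶠ m in atTop, U (port X (π (φ (ψ m)))) < 0 := by
        have hev1 : ∀ᶠ m in atTop, l₀ < lam m := hlam_top.eventually_gt_atTop l₀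
        filter_upwards [hev1, eventually_ge_atTop m₀] with m h1 h2
        have hle : U (port X (π (φ (ψ m)))) ≤ U (scale (lam m) (W m₀)) := by
          rw [hdecomp m]
          refine hU.mono _ _ (integrable_scale _ (integrable_port hXi _))
            (integrable_scale _ (hWi m₀)) ?_
          refine Eventually.of_forall (fun ω => ?_)
          exact mul_le_mul_of_nonneg_left (hWge m₀ m h2 ω) (hlam_pos m).le
        exact lt_of_le_of_lt hle (hl₀ (lam m) h1)
      have hs_le : s ≤ 0 := by
        have htend : Tendsto (fun m => U (port X (π (φ (ψ m))))) atTop (𝓝 s) := by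
          have : (fun m => U (port X (π (φ (ψ m))))) = u ∘ (φ ∘ ψ) :=
            funext (fun m => hπU (φ (ψ m)))
          rw [this]
          exact hulim.comp ((hφmono.comp hψmono).tendsto_atTop)
        exact le_of_tendsto htend (hUneg.mono (fun m hm => hm.le))
      refine ⟨0, hzero_mem, fun π' hπ' => ?_⟩
      have : U (port X (0 : Fin d → ℝ)) = 0 := by rw [port_zero, hU.norm]
      rw [this]
      exact (hsle π' hπ').trans hs_le
    · -- risk sensitivity: contradiction with the risk constraint
      exfalso
      obtain ⟨l₀, hl₀pos, hl₀⟩ := hsR (port X σs) (integrable_port hXi _) hneg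
      set l : ℝ := l₀ + 1 with hldef
      have hlpos : 0 < l := by positivity
      have hRpos : 0 < R (scale l (port X σs)) := hl₀ l (by linarith)
      -- lower Fatou for the scaled directions
      have hfatou := hlf (fun m => scale l (port X (σ (ψ m)))) (scale l (port X σs))
        (fun ω => l * B ω)
        (fun m => integrable_scale _ (integrable_port hXi _))
        (integrable_scale _ (integrable_port hXi _)) (hBi.const_mul l)
        (Eventually.of_forall (fun ω => (hptw ω).const_mul l))
        (fun m => Eventually.of_forall (fun ω => by
          show |l * port X (σ (ψ m)) ω| ≤ l * B ω
          rw [abs_mul, abs_of_pos hlpos]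
          exact mul_le_mul_of_nonneg_left (hdom1 _ (hσnorm (ψ m)) ω) hlpos.le))
      -- the scaled risks vanish asymptotically by star-shapedness
      have hbound : ∀ᶠ m in atTop, R (scale l (port X (σ (ψ m)))) ≤
          ((Rmax / (lam m / l) : ℝ) : EReal) := by
        filter_upwards [hlam_top.eventually_gt_atTop l] with m hm
        have hc : 1 < lam m / l := (one_lt_div hlpos).mpr hm
        have hstar := hps (scale l (port X (σ (ψ m))))
          (integrable_scale _ (integrable_port hXi _)) (lam m / l) hc
        rw [scale_scale, div_mul_cancel₀ _ hlpos.ne'] at hstar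
        have hRm : R (scale (lam m) (port X (σ (ψ m)))) ≤ (Rmax : EReal) := by
          rw [← hdecomp m]
          exact hπC (φ (ψ m))
        exact EReal.le_coe_div_of_mul_le (by positivity) (hstar.trans hRm)
      have hlim0 : Tendsto (fun m => ((Rmax / (lam m / l) : ℝ) : EReal)) atTop (𝓝 0) := by
        rw [show ((0 : EReal)) = ((0 : ℝ) : EReal) by simp]
        rw [EReal.tendsto_coe]
        have : Tendsto (fun m => lam m / l) atTop atTop :=
          hlam_top.atTop_div_const hlpos
        exact Tendsto.div_atTop tendsto_const_nhds this
      have hliminf_le : Filter.liminf (fun m => R (scale l (port X (σ (ψ m))))) atTop ≤ 0 := by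
        calc Filter.liminf (fun m => R (scale l (port X (σ (ψ m))))) atTop
            ≤ Filter.liminf (fun m => ((Rmax / (lam m / l) : ℝ) : EReal)) atTop :=
              liminf_le_liminf hbound (by isBoundedDefault) (by isBoundedDefault)
          _ = 0 := hlim0.liminf_eq
      exact absurd ((hRpos.trans_le hfatou).trans_le hliminf_le) (lt_irrefl _)

end WellPosed

/-! ### Transfer to measurable representatives and assembly -/

section Assembly

variable {μ : Measure Ω}

lemma port_ae_congr {d : ℕ} {X X' : Fin d → Ω → ℝ} (h : ∀ i, X' i =ᵐ[μ] X i)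
    (π : Fin d → ℝ) : port X' π =ᵐ[μ] port X π := by
  have hall : ∀ᵐ ω ∂μ, ∀ i, X' i ω = X i ω := ae_all_iff.mpr h
  filter_upwards [hall] with ω hω
  exact Finset.sum_congr rfl (fun i _ => by rw [hω i])

lemma isMarket_congr {d : ℕ} {X X' : Fin d → Ω → ℝ} (h : ∀ i, X' i =ᵐ[μ] X i)
    (hX'i : ∀ i, Integrable (X' i) μ) (hX : IsMarket μ X) : IsMarket μ X' := by
  refine ⟨hX'i, ?_, ?_⟩
  · intro π hπ
    refine hX.nonredundant π ?_
    filter_upwards [hπ, port_ae_congr h π] with ω h1 h2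
    rw [← h2]; exact h1
  · rintro ⟨π, h1, h2⟩
    refine hX.no_arbitrage ⟨π, ?_, ?_⟩
    · filter_upwards [h1, port_ae_congr h π] with ω ha hb
      rw [← hb]; exact ha
    · have heq : μ {ω | 0 < port X' π ω} = μ {ω | 0 < port X π ω} := by
        refine measure_congr ?_
        filter_upwards [port_ae_congr h π] with ω hω
        change (0 < port X' π ω) = (0 < port X π ω)
        rw [hω]
      rwa [heq] at h2

lemma wellposed_transfer {U R : (Ω → ℝ) → EReal} (hUm : MonoInc μ U) (hRm : MonoDec μ R)
    {d : ℕ} {X X' : Fin d → Ω → ℝ} (h : ∀ i, X' i =ᵐ[μ] X i)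
    (hXi : ∀ i, Integrable (X i) μ) (hX'i : ∀ i, Integrable (X' i) μ)
    (hwp : WellPosedFor U R X') : WellPosedFor U R X := by
  have hUe : ∀ π, U (port X' π) = U (port X π) := fun π =>
    U_congr hUm (integrable_port hX'i π) (integrable_port hXi π) (port_ae_congr h π)
  have hRe : ∀ π, R (port X' π) = R (port X π) := fun π =>
    R_congr hRm (integrable_port hX'i π) (integrable_port hXi π) (port_ae_congr h π)
  intro Rmax hRmax
  obtain ⟨πs, h1, h2⟩ := hwp Rmax hRmax
  refine ⟨πs, by rw [← hRe]; exact h1, fun π hπ => ?_⟩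
  rw [← hUe π, ← hUe πs]
  exact h2 π (by rwa [hRe])

lemma miwellposed_of_sens [IsProbabilityMeasure μ] {U R : (Ω → ℝ) → EReal}
    (hU : IsUtility μ U) (hR : IsRisk μ R)
    (huf : UpperFatou μ U) (hlf : LowerFatou μ R) (hps : PosStarShaped μ R)
    (hsens : SensLLUtility μ U ∨ SensLLRisk μ R) : MIWellPosed μ U R := by
  intro d _hd X hX
  have hrep : ∀ i, ∃ Y : Ω → ℝ, Measurable Y ∧ Integrable Y μ ∧ Y =ᵐ[μ] X i := fun i =>
    exists_meas_rep (hX.integrable i)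
  choose X' hX'm hX'i hX'ae using hrep
  exact wellposed_transfer hU.mono hR.mono hX'ae hX.integrable hX'i
    (wellposed_meas hU hR huf hlf hps hsens hX'm (isMarket_congr hX'ae hX'i hX))

lemma weak_of_wellposed [IsProbabilityMeasure μ] {U R : (Ω → ℝ) → EReal}
    (hU : IsUtility μ U) (hwp : MIWellPosed μ U R) : MIWeaklyWellPosed μ U R := by
  intro d hd X hX Rmax hRmax
  obtain ⟨πs, _h1, h2⟩ := hwp d hd X hX Rmax hRmax
  have hle : (⨆ π : {π : Fin d → ℝ // R (port X π) ≤ (Rmax : EReal)}, U (port X π.1))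
      ≤ U (port X πs) := iSup_le (fun π => h2 π.1 π.2)
  exact lt_of_le_of_lt hle (hU.non_sat _ (integrable_port hX.integrable πs))

end Assembly

/-- under the stated assumptions, market-independent well-posedness,
market-independent weak well-posedness and sensitivity to large losses of `U` or `R`
are all equivalent. -/
theorem stmt9 {Ω : Type*} [MeasurableSpace Ω] (μ : Measure Ω) [IsProbabilityMeasure μ]
    (hatomless : Atomless μ)
    (U R : (Ω → ℝ) → EReal) (hU : IsUtility μ U) (hR : IsRisk μ R)
    (huf : UpperFatou μ U) (hse : SensEquivUtility μ U)
    (hlf : LowerFatou μ R) (hps : PosStarShaped μ R)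
    (hlaw : LawInvariant μ U ∨ LawInvariant μ R) :
    (MIWellPosed μ U R ↔ MIWeaklyWellPosed μ U R) ∧
    (MIWeaklyWellPosed μ U R ↔ (SensLLUtility μ U ∨ SensLLRisk μ R)) := by
  have hca : MIWellPosed μ U R → MIWeaklyWellPosed μ U R := weak_of_wellposed hU
  have hcb : (SensLLUtility μ U ∨ SensLLRisk μ R) → MIWellPosed μ U R :=
    fun hs => miwellposed_of_sens hU hR huf hlf hps hs
  have hbc : MIWeaklyWellPosed μ U R → (SensLLUtility μ U ∨ SensLLRisk μ R) := by
    intro hw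
    by_contra hcon
    push_neg at hcon
    exact not_weak_of_not_sens hatomless hU hR hse hps hlaw hcon.1 hcon.2 hw
  exact ⟨⟨hca, fun hb => hcb (hbc hb)⟩, ⟨hbc, fun hc => hca (hcb hc)⟩⟩

end URPaper
end

section
/- Let U be a utility functional. If U is cash-additive (U(Y+c) = U(Y) + U(c) for all Y ∈ L¹, c ∈ ℝ) or cash-concave (U(λY + (1-λ)c) ≥ λU(Y) + (1-λ)U(c) for all λ ∈ (0,1), Y ∈ L¹, c ∈ ℝ), then U is sensitivity equivalent: U is weakly sensitive to large losses if and only if U is sensitive to large losses. -/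
open MeasureTheory Filter
open scoped ENNReal

namespace URPaper

variable {Ω : Type*} [MeasurableSpace Ω]

/-- a cash-additive or cash-concave utility functional is sensitivity
equivalent. -/
theorem stmt13 {Ω : Type*} [MeasurableSpace Ω] (μ : Measure Ω) [IsProbabilityMeasure μ]
    (U : (Ω → ℝ) → EReal) (hU : IsUtility μ U)
    (h : CashAdditive μ U ∨ CashConcave μ U) :
    SensEquivUtility μ U := by
  constructor
  · -- weak sensitivity → sensitivity
    intro hW Y hY hneg
    by_contra hns
    push_neg at hns
    -- hns : ∀ l₀, 0 < l₀ → ∃ l, l₀ < l ∧ 0 ≤ U (scale l Y)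
    -- find a positive constant c with μ {Y + c < 0} > 0
    have hc : ∃ c : ℝ, 0 < c ∧ 0 < μ {ω | Y ω + c < 0} := by
      by_contra hcon
      push_neg at hcon
      have hnull : μ {ω | Y ω < 0} = 0 := by
        have hsub : {ω | Y ω < 0} ⊆ ⋃ n : ℕ, {ω | Y ω + 1 / (n + 1) < 0} := by
          intro ω hω
          have hω' : (0 : ℝ) < -Y ω := by
            simp only [Set.mem_setOf_eq] at hω; linarith
          obtain ⟨n, hn⟩ := exists_nat_one_div_lt hω'
          exact Set.mem_iUnion.2 ⟨n, by
            simp only [Set.mem_setOf_eq]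
            linarith⟩
        refine measure_mono_null hsub (measure_iUnion_null fun n => ?_)
        have hpos : (0 : ℝ) < 1 / (n + 1) := by positivity
        exact le_antisymm (hcon (1 / (n + 1)) hpos) zero_le
      exact hneg.ne' hnull
    obtain ⟨c, hc0, hZneg⟩ := hc
    set Z : Ω → ℝ := fun ω => Y ω + c with hZdef
    have hZint : Integrable Z μ := hY.add (integrable_const c)
    have hlim := hW Z hZint hZneg
    obtain ⟨b, hb1, hb2⟩ := exists_between hlim
    have hfreq : ∃ᶠ l : ℝ in atTop, b ≤ U (scale l Z) := by
      rw [Filter.frequently_atTop]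
      intro M
      rcases h with hca | hcc
      · -- cash-additive case
        obtain ⟨y₀, hy₀⟩ := lt_iSup_iff.mp hb2
        have hmaxpos : (0 : ℝ) < max (max M (y₀ / c)) 1 :=
          lt_of_lt_of_le zero_lt_one (le_max_right _ _)
        obtain ⟨l, hl_gt, hl_nonneg⟩ := hns (max (max M (y₀ / c)) 1) hmaxpos
        have hMl : M ≤ l :=
          le_of_lt (lt_of_le_of_lt ((le_max_left M (y₀ / c)).trans (le_max_left _ 1)) hl_gt)
        have hy₀lc : y₀ < l * c := by
          have h1 : y₀ / c < l :=
            lt_of_le_of_lt ((le_max_right M (y₀ / c)).trans (le_max_left _ 1)) hl_gt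
          rw [div_lt_iff₀ hc0] at h1; linarith
        refine ⟨l, hMl, ?_⟩
        have hintlY : Integrable (scale l Y) μ := hY.const_mul l
        have heq : scale l Z = fun ω => scale l Y ω + l * c := by
          funext ω; simp only [scale, hZdef]; ring
        have hcaeq := hca (scale l Y) hintlY (l * c)
        have hmonoc : U (fun _ => y₀) ≤ U (fun _ => l * c) :=
          hU.mono _ _ (integrable_const _) (integrable_const _)
            (Filter.Eventually.of_forall fun _ => hy₀lc.le)
        calc b ≤ U (fun _ => y₀) := hy₀.le
          _ ≤ U (fun _ => l * c) := hmonoc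
          _ = 0 + U (fun _ => l * c) := (zero_add _).symm
          _ ≤ U (scale l Y) + U (fun _ => l * c) := add_le_add_left hl_nonneg _
          _ = U (scale l Z) := by rw [heq]; exact hcaeq.symm
      · -- cash-concave case
        obtain ⟨b', hbb', hb'L⟩ := exists_between hb2
        obtain ⟨y₀, hy₀⟩ := lt_iSup_iff.mp hb'L
        have hne_top : U (fun _ => y₀) ≠ ⊤ := hU.ne_top _ (integrable_const _)
        have hne_bot : U (fun _ => y₀) ≠ ⊥ :=
          (lt_of_le_of_lt bot_le hy₀).ne'
        set u₀ : ℝ := (U (fun _ => y₀)).toReal with hu₀def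
        have hUy₀ : U (fun _ => y₀) = (u₀ : EReal) :=
          (EReal.coe_toReal hne_top hne_bot).symm
        have hbu : b < (u₀ : EReal) := hbb'.trans (hUy₀ ▸ hy₀)
        have hβ : ∃ β : ℝ, b ≤ (β : EReal) ∧ β < u₀ := by
          rcases eq_or_ne b ⊥ with hbbot | hbbot
          · exact ⟨u₀ - 1, by simp [hbbot], by linarith⟩
          · lift b to ℝ using ⟨ne_top_of_lt hbu, hbbot⟩
            exact ⟨b, le_refl _, by exact_mod_cast hbu⟩
        obtain ⟨β, hβb, hβu⟩ := hβ
        set l : ℝ := min (1 / 2) ((u₀ - β) / (2 * (|u₀| + 1))) with hldef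
        have hβu' : (0 : ℝ) < u₀ - β := by linarith
        have hl0 : 0 < l := lt_min (by norm_num) (by positivity)
        have hl1 : l < 1 := lt_of_le_of_lt (min_le_left _ _) (by norm_num)
        have h1l : (0 : ℝ) < 1 - l := by linarith
        have hkey : β < (1 - l) * u₀ := by
          have hmin : l ≤ (u₀ - β) / (2 * (|u₀| + 1)) := min_le_right _ _
          have hD : (0 : ℝ) < 2 * (|u₀| + 1) := by positivity
          rw [le_div_iff₀ hD] at hmin
          have h2 : l * u₀ ≤ l * |u₀| :=
            mul_le_mul_of_nonneg_left (le_abs_self _) hl0.le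
          nlinarith [abs_nonneg u₀, hl0.le]
        -- pick a large scaling from non-sensitivity
        have hmaxpos : (0 : ℝ) < max (max (M / l) (y₀ * (1 - l) / (l * c))) 1 :=
          lt_of_lt_of_le zero_lt_one (le_max_right _ _)
        obtain ⟨lam, hlam_gt, hlam_nonneg⟩ :=
          hns (max (max (M / l) (y₀ * (1 - l) / (l * c))) 1) hmaxpos
        have hMl : M ≤ l * lam := by
          have h1 : M / l < lam :=
            lt_of_le_of_lt ((le_max_left _ _).trans (le_max_left _ 1)) hlam_gt
          rw [div_lt_iff₀ hl0] at h1
          nlinarith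
        refine ⟨l * lam, hMl, ?_⟩
        set c' : ℝ := l * lam * c / (1 - l) with hc'def
        have hc'big : y₀ ≤ c' := by
          have h1 : y₀ * (1 - l) / (l * c) < lam :=
            lt_of_le_of_lt ((le_max_right _ _).trans (le_max_left _ 1)) hlam_gt
          have hlc : (0 : ℝ) < l * c := mul_pos hl0 hc0
          rw [div_lt_iff₀ hlc] at h1
          rw [hc'def, le_div_iff₀ h1l]
          nlinarith
        have heq : scale (l * lam) Z = fun ω => l * scale lam Y ω + (1 - l) * c' := by
          funext ω
          show l * lam * (Y ω + c) = l * (lam * Y ω) + (1 - l) * (l * lam * c / (1 - l))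
          rw [mul_comm (1 - l), div_mul_cancel₀ _ h1l.ne']
          ring
        have hcc' := hcc (scale lam Y) (hY.const_mul lam) c' l hl0 hl1
        have hUc' : U (fun _ => y₀) ≤ U (fun _ => c') :=
          hU.mono _ _ (integrable_const _) (integrable_const _)
            (Filter.Eventually.of_forall fun _ => hc'big)
        have hvne_top : U (fun _ => c') ≠ ⊤ := hU.ne_top _ (integrable_const _)
        have hvne_bot : U (fun _ => c') ≠ ⊥ := by
          intro h0
          rw [h0, le_bot_iff, hUy₀] at hUc'
          exact (EReal.coe_ne_bot u₀) hUc'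
        set v : ℝ := (U (fun _ => c')).toReal with hvdef
        have hv : U (fun _ => c') = (v : EReal) :=
          (EReal.coe_toReal hvne_top hvne_bot).symm
        have hvu : u₀ ≤ v := by
          rw [hUy₀, hv] at hUc'; exact_mod_cast hUc'
        have hβv : β ≤ (1 - l) * v := by nlinarith
        calc b ≤ (β : EReal) := hβb
          _ ≤ (((1 - l) * v : ℝ) : EReal) := by exact_mod_cast hβv
          _ = ((1 - l : ℝ) : EReal) * (v : EReal) := by rw [EReal.coe_mul]
          _ = 0 + ((1 - l : ℝ) : EReal) * U (fun _ => c') := by rw [hv, zero_add]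
          _ ≤ (l : EReal) * U (scale lam Y) + ((1 - l : ℝ) : EReal) * U (fun _ => c') := by
              refine add_le_add_left ?_ _
              exact mul_nonneg (by exact_mod_cast hl0.le) hlam_nonneg
          _ ≤ U (fun ω => l * scale lam Y ω + (1 - l) * c') := hcc'
          _ = U (scale (l * lam) Z) := by rw [heq]
    exact absurd (Filter.le_limsup_of_frequently_le hfreq) (not_le.2 hb1)
  · -- sensitivity → weak sensitivity
    intro hS Y hY hneg
    obtain ⟨l₀, _, hneg'⟩ := hS Y hY hneg
    have h1 : Filter.limsup (fun l : ℝ => U (scale l Y)) atTop ≤ 0 := by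
      refine Filter.limsup_le_of_le (by isBoundedDefault) ?_
      filter_upwards [Filter.eventually_gt_atTop l₀] with l hl
      exact (hneg' l hl).le
    have h2 : (0 : EReal) < limConst U := by
      have := hU.non_sat (fun _ => (0 : ℝ)) (integrable_const _)
      rwa [hU.norm] at this
    exact lt_of_le_of_lt h1 h2

end URPaper
end

section
/- If u is an unbounded utility function that is negatively star-shaped on ℝ₊ (u(λy) ≤ λu(y) for all y ≥ 0 and λ ≥ 1), then the expected utility functional E_u(Y) := E[u(Y)] on L¹ is sensitivity equivalent: E_u is weakly sensitive to large losses if and only if E_u is sensitive to large losses. -/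
open MeasureTheory Filter
open scoped ENNReal

namespace URPaper

variable {Ω : Type*} [MeasurableSpace Ω]

section Stmt15Aux

open scoped Classical

/-! ### `posPart` lemmas -/

lemma posPart_of_nonpos {x : EReal} (h : x ≤ 0) : posPart x = 0 := by
  unfold posPart
  rcases eq_or_ne x ⊤ with rfl | hx
  · simp at h
  · simp only [hx, if_false, ENNReal.ofReal_eq_zero]
    induction x using EReal.rec with
    | bot => simp
    | coe a => simpa using h
    | top => simp at h

lemma posPart_mono {x y : EReal} (h : x ≤ y) : posPart x ≤ posPart y := by
  unfold posPart
  rcases eq_or_ne y ⊤ with rfl | hy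
  · simp
  · have hx : x ≠ ⊤ := fun hx => hy (top_le_iff.mp (hx ▸ h))
    simp only [hx, hy, if_false]
    rcases eq_or_ne x ⊥ with rfl | hx'
    · simp
    · exact ENNReal.ofReal_le_ofReal (EReal.toReal_le_toReal h hx' hy)

lemma posPart_ne_top {x : EReal} (h : x ≠ ⊤) : posPart x ≠ ⊤ := by
  simp [posPart, h]

lemma lt_posPart {M : ℝ≥0∞} (hM : M ≠ ⊤) {x : EReal} (h : (M : EReal) < x) : M < posPart x := by
  unfold posPart
  rcases eq_or_ne x ⊤ with rfl | hx
  · simpa [lt_top_iff_ne_top] using hM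
  · simp only [hx, if_false]
    rw [ENNReal.lt_ofReal_iff_toReal_lt hM]
    have hxb : x ≠ ⊥ := by
      intro hbot
      rw [hbot] at h
      exact absurd h (by simp)
    have hM' : (M : EReal) = ((M.toReal : ℝ) : EReal) := by
      rw [← EReal.toReal_coe_ennreal (x := M), EReal.coe_toReal (by simp [hM]) (by simp)]
    rw [hM', ← EReal.coe_toReal hx hxb] at h
    exact_mod_cast h

lemma enn_coe_posPart_sub {x : EReal} (hx : x ≠ ⊤) :
    ((posPart x : ℝ≥0∞) : EReal) - ((posPart (-x) : ℝ≥0∞) : EReal) = x := by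
  induction x using EReal.rec with
  | bot =>
      have h1 : posPart (⊥ : EReal) = 0 := posPart_of_nonpos bot_le
      have h2 : posPart (-(⊥ : EReal)) = ⊤ := by simp [posPart]
      rw [h1, h2]
      simp [EReal.coe_ennreal_top]
  | coe a =>
      have h1 : posPart ((a : ℝ) : EReal) = ENNReal.ofReal a := by
        simp [posPart, EReal.toReal_coe]
      have h2 : posPart (-((a : ℝ) : EReal)) = ENNReal.ofReal (-a) := by
        rw [← EReal.coe_neg]
        simp [posPart, EReal.toReal_coe]
      have h3 : (max a 0 : ℝ) - max (-a) 0 = a := max_zero_sub_max_neg_zero_eq_self a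
      rw [h1, h2, EReal.coe_ennreal_ofReal, EReal.coe_ennreal_ofReal, ← EReal.coe_sub, h3]
  | top => exact absurd rfl hx

/-! ### EReal/ENNReal arithmetic helpers -/

lemma enn_sub_le_coe {a b : ℝ≥0∞} {r : ℝ}
    (h : (a : EReal) - (b : EReal) ≤ (r : EReal)) : a ≤ b + ENNReal.ofReal r := by
  rcases eq_or_ne b ⊤ with rfl | hb
  · simp
  rcases eq_or_ne a ⊤ with rfl | ha
  · exfalso
    have : ((⊤ : ℝ≥0∞) : EReal) - (b : EReal) = ⊤ := by
      rw [EReal.coe_ennreal_top]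
      rw [sub_eq_add_neg]
      apply EReal.top_add_of_ne_bot
      simp [hb]
    rw [this] at h
    exact absurd h (by simp)
  · have ha' : (a : EReal) = ((a.toReal : ℝ) : EReal) := by
      rw [← EReal.toReal_coe_ennreal (x := a)]
      rw [EReal.coe_toReal (by simp [ha]) (by simp)]
    have hb' : (b : EReal) = ((b.toReal : ℝ) : EReal) := by
      rw [← EReal.toReal_coe_ennreal (x := b)]
      rw [EReal.coe_toReal (by simp [hb]) (by simp)]
    rw [ha', hb', ← EReal.coe_sub] at h
    have hr : a.toReal - b.toReal ≤ r := by exact_mod_cast h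
    calc a = ENNReal.ofReal a.toReal := (ENNReal.ofReal_toReal ha).symm
    _ ≤ ENNReal.ofReal (b.toReal + r) := ENNReal.ofReal_le_ofReal (by linarith)
    _ ≤ ENNReal.ofReal b.toReal + ENNReal.ofReal r := ENNReal.ofReal_add_le
    _ = b + ENNReal.ofReal r := by rw [ENNReal.ofReal_toReal hb]

lemma enn_sub_nonneg {a b : ℝ≥0∞}
    (h : (0 : EReal) ≤ (a : EReal) - (b : EReal)) : b ≠ ⊤ ∧ b ≤ a := by
  rcases eq_or_ne b ⊤ with rfl | hb
  · exfalso
    have : (a : EReal) - ((⊤ : ℝ≥0∞) : EReal) = ⊥ := by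
      rw [EReal.coe_ennreal_top, sub_eq_add_neg]
      simp
    rw [this] at h
    exact absurd h (by simp)
  refine ⟨hb, ?_⟩
  rcases eq_or_ne a ⊤ with rfl | ha
  · exact le_top
  · have ha' : (a : EReal) = ((a.toReal : ℝ) : EReal) := by
      rw [← EReal.toReal_coe_ennreal (x := a), EReal.coe_toReal (by simp [ha]) (by simp)]
    have hb' : (b : EReal) = ((b.toReal : ℝ) : EReal) := by
      rw [← EReal.toReal_coe_ennreal (x := b), EReal.coe_toReal (by simp [hb]) (by simp)]
    rw [ha', hb', ← EReal.coe_sub] at h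
    have : (0 : ℝ) ≤ a.toReal - b.toReal := by exact_mod_cast h
    exact (ENNReal.toReal_le_toReal hb ha).mp (by linarith)

lemma enn_sub_lt_zero {a b : ℝ≥0∞} (h : a < b) : (a : EReal) - (b : EReal) < 0 := by
  have ha : a ≠ ⊤ := h.ne_top
  rcases eq_or_ne b ⊤ with rfl | hb
  · have : (a : EReal) - ((⊤ : ℝ≥0∞) : EReal) = ⊥ := by
      rw [EReal.coe_ennreal_top, sub_eq_add_neg]; simp
    rw [this]
    exact bot_lt_iff_ne_bot.mpr (by simp)
  · have ha' : (a : EReal) = ((a.toReal : ℝ) : EReal) := by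
      rw [← EReal.toReal_coe_ennreal (x := a), EReal.coe_toReal (by simp [ha]) (by simp)]
    have hb' : (b : EReal) = ((b.toReal : ℝ) : EReal) := by
      rw [← EReal.toReal_coe_ennreal (x := b), EReal.coe_toReal (by simp [hb]) (by simp)]
    rw [ha', hb', ← EReal.coe_sub]
    have : a.toReal < b.toReal := ENNReal.toReal_lt_toReal ha hb |>.mpr h
    exact_mod_cast sub_neg.mpr this

lemma exists_real_gt_of_lt_top {x : EReal} (h : x < ⊤) : ∃ r : ℝ, x < (r : EReal) := by
  induction x using EReal.rec with
  | bot => exact ⟨0, bot_lt_iff_ne_bot.mpr (by simp)⟩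
  | coe a => exact ⟨a + 1, by exact_mod_cast lt_add_one a⟩
  | top => exact absurd h (lt_irrefl _)

end Stmt15Aux

section Stmt15Main

open scoped Classical

variable {Ω : Type*} [MeasurableSpace Ω] {μ : Measure Ω} [IsProbabilityMeasure μ]
  {u : ℝ → EReal}

lemma expEU_congr_ae {Y Z : Ω → ℝ} (h : Y =ᵐ[μ] Z) : expEU μ u Y = expEU μ u Z := by
  unfold expEU
  have h1 : (fun ω => posPart (u (Y ω))) =ᵐ[μ] fun ω => posPart (u (Z ω)) :=
    h.mono fun ω hω => by simp only [hω]
  have h2 : (fun ω => posPart (-(u (Y ω)))) =ᵐ[μ] fun ω => posPart (-(u (Z ω))) :=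
    h.mono fun ω hω => by simp only [hω]
  rw [lintegral_congr_ae h1, lintegral_congr_ae h2]

lemma expEU_const (hu : IsUtilityFun u) (c : ℝ) : expEU μ u (fun _ => c) = u c := by
  unfold expEU
  rw [lintegral_const, lintegral_const, measure_univ, mul_one, mul_one]
  exact enn_coe_posPart_sub (hu.ne_top c)

lemma limConst_expEU (hu : IsUtilityFun u) : limConst (expEU μ u) = ⨆ y, u y := by
  unfold limConst
  exact iSup_congr fun y => expEU_const hu y

lemma u_nonneg (hu : IsUtilityFun u) {y : ℝ} (hy : 0 ≤ y) : 0 ≤ u y :=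
  hu.norm ▸ hu.mono hy

lemma u_nonpos (hu : IsUtilityFun u) {y : ℝ} (hy : y ≤ 0) : u y ≤ 0 :=
  hu.norm ▸ hu.mono hy

/-- gains blow up when `u` is unbounded above -/
lemma gain_blowup (hu : IsUtilityFun u) (htop : (⨆ y, u y) = ⊤)
    {M : ℝ≥0∞} (hM : M ≠ ⊤) : ∃ Λ : ℝ, ∀ l, Λ ≤ l → M < posPart (u l) := by
  have hlt : (M : EReal) < ⨆ y, u y := by
    rw [htop]
    exact lt_top_iff_ne_top.mpr (by simp [hM])
  obtain ⟨y, hy⟩ := lt_iSup_iff.mp hlt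
  exact ⟨y, fun l hl => lt_posPart hM (lt_of_lt_of_le hy (hu.mono hl))⟩

/-- losses blow up when `u` is bounded above but unbounded -/
lemma loss_blowup_of_ne_top (hu : IsUtilityFun u) (hunb : UnboundedFun u)
    (htop : (⨆ y, u y) ≠ ⊤) {M : ℝ≥0∞} (hM : M ≠ ⊤) :
    ∃ Λ : ℝ, ∀ l, Λ ≤ l → M < posPart (-(u (-l))) := by
  set S : EReal := ⨆ y, u y with hS
  have hS0 : 0 ≤ S := le_trans (u_nonneg hu le_rfl) (le_iSup u 0)
  have hSbot : S ≠ ⊥ := fun hb => by simp [hb] at hS0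
  set C : ℝ := max (M.toReal + 1) S.toReal with hC
  have hub : ∀ y : ℝ, u y ≤ (C : EReal) := by
    intro y
    calc u y ≤ S := le_iSup u y
    _ = ((S.toReal : ℝ) : EReal) := (EReal.coe_toReal htop hSbot).symm
    _ ≤ (C : EReal) := by exact_mod_cast le_max_right _ _
  have : ∃ y : ℝ, ¬(((-C : ℝ) : EReal) ≤ u y ∧ u y ≤ ((C : ℝ) : EReal)) := by
    by_contra hcon
    push_neg at hcon
    exact hunb ⟨C, hcon⟩
  obtain ⟨y, hy⟩ := this
  have hy' : u y < ((-C : ℝ) : EReal) := by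
    rcases not_and_or.mp hy with h | h
    · exact lt_of_not_ge h
    · exact absurd (hub y) h
  refine ⟨-y, fun l hl => ?_⟩
  have h1 : u (-l) ≤ u y := hu.mono (by linarith)
  have h3 : u (-l) < -((C : ℝ) : EReal) := by
    rw [show -((C : ℝ) : EReal) = ((-C : ℝ) : EReal) by norm_cast]
    exact lt_of_le_of_lt h1 hy'
  have h2 : ((C : ℝ) : EReal) < -(u (-l)) := EReal.lt_neg_comm.mpr h3
  apply lt_posPart hM
  calc (M : EReal) = ((M.toReal : ℝ) : EReal) := by
        rw [← EReal.toReal_coe_ennreal (x := M), EReal.coe_toReal (by simp [hM]) (by simp)]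
  _ < ((C : ℝ) : EReal) := by exact_mod_cast lt_of_lt_of_le (lt_add_one _) (le_max_left _ _)
  _ < -(u (-l)) := h2

/-- a classical piecewise function, with frozen `Decidable` instance -/
noncomputable def pw (B : Set Ω) (c : ℝ) (g : Ω → ℝ) : Ω → ℝ := fun ω =>
  if h : ω ∈ B then c else g ω

lemma pw_of_mem {B : Set Ω} {c : ℝ} {g : Ω → ℝ} {ω : Ω} (h : ω ∈ B) : pw B c g ω = c := by
  simp [pw, h]

lemma pw_of_not_mem {B : Set Ω} {c : ℝ} {g : Ω → ℝ} {ω : Ω} (h : ω ∉ B) : pw B c g ω = g ω := by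
  simp [pw, h]

lemma pw_measurable {B : Set Ω} (hB : MeasurableSet B) {c : ℝ} {g : Ω → ℝ}
    (hg : Measurable g) : Measurable (pw B c g) := by
  unfold pw
  simp only [dite_eq_ite]
  exact Measurable.ite hB measurable_const hg

lemma expEU_scale_piecewise (hu : IsUtilityFun u) {B : Set Ω} (hB : MeasurableSet B)
    {g : Ω → ℝ} (hg : ∀ ω, 0 ≤ g ω) {c : ℝ} (hc : c ≤ 0) {l : ℝ} (hl : 0 ≤ l) :
    expEU μ u (scale l (pw B c g)) =
      ((∫⁻ ω in Bᶜ, posPart (u (l * g ω)) ∂μ : ℝ≥0∞) : EReal)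
        - ((posPart (-(u (l * c))) * μ B : ℝ≥0∞) : EReal) := by
  have hpos : ∫⁻ ω, posPart (u (scale l (pw B c g) ω)) ∂μ
      = ∫⁻ ω in Bᶜ, posPart (u (l * g ω)) ∂μ := by
    rw [← lintegral_add_compl (μ := μ)
      (f := fun ω => posPart (u (scale l (pw B c g) ω))) hB]
    have e1 : ∫⁻ ω in B, posPart (u (scale l (pw B c g) ω)) ∂μ
        = ∫⁻ _ in B, (0 : ℝ≥0∞) ∂μ := by
      refine setLIntegral_congr_fun hB (fun ω hω => ?_)
      simp only [scale, pw_of_mem hω]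
      exact posPart_of_nonpos (u_nonpos hu (mul_nonpos_iff.mpr (Or.inl ⟨hl, hc⟩)))
    have e2 : ∫⁻ ω in Bᶜ, posPart (u (scale l (pw B c g) ω)) ∂μ
        = ∫⁻ ω in Bᶜ, posPart (u (l * g ω)) ∂μ := by
      refine setLIntegral_congr_fun hB.compl (fun ω hω => ?_)
      simp only [scale, Set.mem_compl_iff] at hω ⊢
      rw [pw_of_not_mem hω]
    rw [e1, e2, lintegral_zero, zero_add]
  have hneg : ∫⁻ ω, posPart (-(u (scale l (pw B c g) ω))) ∂μ
      = posPart (-(u (l * c))) * μ B := by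
    rw [← lintegral_add_compl (μ := μ)
      (f := fun ω => posPart (-(u (scale l (pw B c g) ω)))) hB]
    have e1 : ∫⁻ ω in B, posPart (-(u (scale l (pw B c g) ω))) ∂μ
        = posPart (-(u (l * c))) * μ B := by
      rw [setLIntegral_congr_fun hB
        (fun ω hω => by simp only [scale, pw_of_mem hω] : ∀ ω ∈ B,
          posPart (-(u (scale l (pw B c g) ω)))
            = posPart (-(u (l * c))))]
      exact setLIntegral_const B _
    have e2 : ∫⁻ ω in Bᶜ, posPart (-(u (scale l (pw B c g) ω))) ∂μ
        = ∫⁻ _ in Bᶜ, (0 : ℝ≥0∞) ∂μ := by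
      refine setLIntegral_congr_fun hB.compl (fun ω hω => ?_)
      simp only [scale, Set.mem_compl_iff] at hω ⊢
      rw [pw_of_not_mem hω]
      refine posPart_of_nonpos ?_
      have h0 : (0 : EReal) ≤ u (l * g ω) := u_nonneg hu (mul_nonneg hl (hg ω))
      have h1 : -u (l * g ω) ≤ -0 := EReal.neg_le_neg_iff.mpr h0
      simpa using h1
    rw [e1, e2, lintegral_zero, add_zero]
  unfold expEU
  rw [hpos, hneg]

/-- losses blow up when `u` is unbounded above, under weak sensitivity -/
lemma loss_blowup_of_top (hu : IsUtilityFun u) (hatomless : Atomless μ)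
    (hweak : WeakSensLLUtility μ (expEU μ u)) (htop : (⨆ y, u y) = ⊤)
    {M : ℝ≥0∞} (hM : M ≠ ⊤) :
    ∃ Λ : ℝ, ∀ l, Λ ≤ l → M < posPart (-(u (-l))) := by
  obtain ⟨t, -, ht, ht0, ht1⟩ := hatomless Set.univ MeasurableSet.univ (by simp)
  rw [measure_univ] at ht1
  have htc0 : 0 < μ tᶜ := by
    rw [measure_compl ht (measure_ne_top _ _), measure_univ]
    exact tsub_pos_iff_lt.mpr ht1
  have htcne : μ tᶜ ≠ ⊤ := measure_ne_top _ _
  have htne : μ t ≠ ⊤ := measure_ne_top _ _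
  set Z : Ω → ℝ := pw tᶜ (-1) (fun _ => 1) with hZ
  have hZmeas : Measurable Z := pw_measurable ht.compl measurable_const
  have hZint : Integrable Z μ := by
    refine Integrable.mono' (integrable_const (1 : ℝ)) hZmeas.aestronglyMeasurable ?_
    refine Filter.Eventually.of_forall fun ω => ?_
    rcases Classical.em (ω ∈ tᶜ) with h | h
    · simp [hZ, pw_of_mem h]
    · simp [hZ, pw_of_not_mem h]
  have hZneg : {ω | Z ω < 0} = tᶜ := by
    ext ω
    rcases Classical.em (ω ∈ tᶜ) with h | h
    · simp [hZ, pw_of_mem h, h]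
    · simp [hZ, pw_of_not_mem h, h]
  have hZbad : 0 < μ {ω | Z ω < 0} := by rw [hZneg]; exact htc0
  have hlim := hweak Z hZint hZbad
  rw [limConst_expEU hu, htop] at hlim
  obtain ⟨r, hr⟩ := exists_real_gt_of_lt_top hlim
  obtain ⟨Λ₀, hΛ₀⟩ := eventually_atTop.mp (Filter.eventually_lt_of_limsup_lt hr)
  set R : ℝ≥0∞ := ENNReal.ofReal r with hR
  have hRne : R ≠ ⊤ := ENNReal.ofReal_ne_top
  set M' : ℝ≥0∞ := (M * μ tᶜ + R) / μ t with hM'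
  have hM'ne : M' ≠ ⊤ := by
    refine (ENNReal.div_lt_top ?_ (ne_of_gt ht0)).ne
    exact ENNReal.add_ne_top.mpr ⟨ENNReal.mul_ne_top hM htcne, hRne⟩
  obtain ⟨Λ₁, hΛ₁⟩ := gain_blowup hu htop hM'ne
  refine ⟨max (max Λ₀ Λ₁) 0, fun l hl => ?_⟩
  have h0l : 0 ≤ l := le_trans (le_max_right _ _) hl
  have hcomp0 : expEU μ u (scale l (pw tᶜ (-1) (fun _ => 1)))
      = ((∫⁻ ω in tᶜᶜ, posPart (u (l * 1)) ∂μ : ℝ≥0∞) : EReal)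
        - ((posPart (-(u (l * (-1)))) * μ tᶜ : ℝ≥0∞) : EReal) :=
    expEU_scale_piecewise (μ := μ) hu ht.compl (g := fun _ => (1 : ℝ)) (fun _ => zero_le_one)
      (by norm_num : (-1 : ℝ) ≤ 0) h0l
  have hcomp : expEU μ u (scale l (pw tᶜ (-1) (fun _ => 1)))
      = ((posPart (u l) * μ t : ℝ≥0∞) : EReal)
        - ((posPart (-(u (l * (-1)))) * μ tᶜ : ℝ≥0∞) : EReal) := by
    rw [hcomp0]
    congr 2
    rw [compl_compl, mul_one]
    exact setLIntegral_const t _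
  have hev := hΛ₀ l (le_trans (le_max_left _ _) (le_trans (le_max_left _ _) hl))
  rw [hZ, hcomp] at hev
  have h2 : posPart (u l) * μ t ≤ posPart (-(u (l * (-1)))) * μ tᶜ + R := enn_sub_le_coe hev.le
  have h3 : M' < posPart (u l) := hΛ₁ l (le_trans (le_max_right _ _) (le_trans (le_max_left _ _) hl))
  have h4 : M * μ tᶜ + R < posPart (u l) * μ t := by
    rw [hM'] at h3
    exact (ENNReal.div_lt_iff (Or.inl (ne_of_gt ht0)) (Or.inl htne)).mp h3
  have h5 : M * μ tᶜ + R < posPart (-(u (l * (-1)))) * μ tᶜ + R := lt_of_lt_of_le h4 h2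
  have h6 : M * μ tᶜ < posPart (-(u (l * (-1)))) * μ tᶜ :=
    (ENNReal.add_lt_add_iff_right hRne).mp h5
  have h7 : M < posPart (-(u (l * (-1)))) :=
    (ENNReal.mul_left_strictMono (ne_of_gt htc0) htcne).lt_iff_lt.mp h6
  rwa [mul_neg_one] at h7

theorem stmt15' {Ω : Type*} [MeasurableSpace Ω] (μ : Measure Ω) [IsProbabilityMeasure μ]
    (hatomless : Atomless μ)
    (u : ℝ → EReal) (hu : IsUtilityFun u)
    (hunb : UnboundedFun u) (hnss : NegStarShapedPos u) :
    SensEquivUtility μ (expEU μ u) := by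
  constructor
  · -- weak sensitivity implies sensitivity
    intro hweak Y hY hYbad
    obtain ⟨Y', hY'meas, hYY'⟩ : ∃ Y' : Ω → ℝ, Measurable Y' ∧ Y =ᵐ[μ] Y' :=
      ⟨hY.1.mk Y, hY.1.stronglyMeasurable_mk.measurable, hY.1.ae_eq_mk⟩
    have hY'int : Integrable Y' μ := hY.congr hYY'
    have hscale : ∀ l : ℝ, scale l Y =ᵐ[μ] scale l Y' :=
      fun l => hYY'.mono fun ω h => by simp only [scale, h]
    have hsetae : {ω | Y' ω < 0} =ᵐ[μ] {ω | Y ω < 0} := hYY'.mono fun ω h => by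
      change (Y' ω < 0) = (Y ω < 0)
      rw [h]
    have hYbad' : 0 < μ {ω | Y' ω < 0} := by rw [measure_congr hsetae]; exact hYbad
    have hε : ∃ ε : ℝ, 0 < ε ∧ 0 < μ {ω | Y' ω ≤ -ε} := by
      by_contra hcon
      push_neg at hcon
      have hz : ∀ n : ℕ, μ {ω | Y' ω ≤ -(1 / (n + 1 : ℝ))} = 0 := fun n =>
        le_zero_iff.mp (hcon (1 / (n + 1 : ℝ)) (by positivity))
      have hsub : {ω | Y' ω < 0} ⊆ ⋃ n : ℕ, {ω | Y' ω ≤ -(1 / (n + 1 : ℝ))} := by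
        intro ω hω
        obtain ⟨n, hn⟩ := exists_nat_one_div_lt (show (0 : ℝ) < -Y' ω by
          simpa using (hω : Y' ω < 0))
        exact Set.mem_iUnion.mpr ⟨n, by simp only [Set.mem_setOf_eq]; linarith⟩
      have h0 : μ {ω | Y' ω < 0} = 0 :=
        measure_mono_null hsub (measure_iUnion_null fun n => hz n)
      rw [h0] at hYbad'
      exact lt_irrefl _ hYbad'
    obtain ⟨ε, hε0, hq⟩ := hε
    have hs : MeasurableSet {ω | Y' ω ≤ -ε} := measurableSet_le hY'meas measurable_const
    set s : Set Ω := {ω | Y' ω ≤ -ε} with hs_def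
    set q : ℝ≥0∞ := μ s with hq_def
    have hqne : q ≠ ⊤ := measure_ne_top _ _
    have hNbound : ∀ l : ℝ, 0 < l →
        posPart (-(u (-(ε * l)))) * q ≤ ∫⁻ ω, posPart (-(u (scale l Y' ω))) ∂μ := by
      intro l hl
      calc posPart (-(u (-(ε * l)))) * q
          = ∫⁻ _ in s, posPart (-(u (-(ε * l)))) ∂μ := (setLIntegral_const _ _).symm
      _ ≤ ∫⁻ ω in s, posPart (-(u (scale l Y' ω))) ∂μ := by
          refine lintegral_mono_ae ?_
          rw [ae_restrict_iff' hs]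
          refine Filter.Eventually.of_forall fun ω hω => ?_
          refine posPart_mono (EReal.neg_le_neg_iff.mpr (hu.mono ?_))
          simp only [scale]
          have hω' : Y' ω ≤ -ε := hω
          calc l * Y' ω ≤ l * (-ε) := mul_le_mul_of_nonneg_left hω' hl.le
          _ = -(ε * l) := by ring
      _ ≤ ∫⁻ ω, posPart (-(u (scale l Y' ω))) ∂μ := setLIntegral_le_lintegral s _
    by_cases htop : (⨆ y, u y) = ⊤
    · -- Case I : u unbounded above
      obtain ⟨B, hBs, hB, hB0, hBq⟩ := hatomless s hs (ne_of_gt hq)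
      set β : ℝ≥0∞ := μ B with hβ
      have hβne : β ≠ ⊤ := measure_ne_top _ _
      set W : Ω → ℝ := pw B (-1) (fun ω => max (Y' ω) 0 / ε) with hW
      have hWmeas : Measurable W :=
        pw_measurable hB ((hY'meas.max measurable_const).div_const ε)
      have hWint : Integrable W μ := by
        refine Integrable.mono'
          ((integrable_const (1 : ℝ)).add (hY'int.abs.div_const ε))
          hWmeas.aestronglyMeasurable ?_
        refine Filter.Eventually.of_forall fun ω => ?_
        have hd : (0 : ℝ) ≤ |Y' ω| / ε := by positivity
        rcases Classical.em (ω ∈ B) with h | h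
        · rw [hW, pw_of_mem h]
          simp only [Real.norm_eq_abs, abs_neg, abs_one, Pi.add_apply]
          linarith
        · rw [hW, pw_of_not_mem h]
          simp only [Real.norm_eq_abs, Pi.add_apply]
          have h1 : |max (Y' ω) 0 / ε| = max (Y' ω) 0 / ε :=
            abs_of_nonneg (div_nonneg (le_max_right _ _) hε0.le)
          have h2 : max (Y' ω) 0 ≤ |Y' ω| := by
            rcases le_or_gt (Y' ω) 0 with h3 | h3
            · rw [max_eq_right h3]; exact abs_nonneg _
            · rw [max_eq_left h3.le]; exact le_abs_self _
          rw [h1]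
          have h4 : max (Y' ω) 0 / ε ≤ |Y' ω| / ε := by gcongr
          linarith
      have hWneg : {ω | W ω < 0} = B := by
        ext ω
        simp only [Set.mem_setOf_eq]
        constructor
        · intro hlt
          by_contra h
          rw [hW, pw_of_not_mem h] at hlt
          exact absurd hlt (not_lt.mpr (div_nonneg (le_max_right _ _) hε0.le))
        · intro h
          rw [hW, pw_of_mem h]
          norm_num
      have hWbad : 0 < μ {ω | W ω < 0} := by rw [hWneg]; exact hB0
      have hlimW := hweak W hWint hWbad
      rw [limConst_expEU hu, htop] at hlimW
      obtain ⟨r, hr⟩ := exists_real_gt_of_lt_top hlimW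
      obtain ⟨Λ₀, hΛ₀⟩ := eventually_atTop.mp (Filter.eventually_lt_of_limsup_lt hr)
      have hγ0 : q - β ≠ 0 := ne_of_gt (tsub_pos_iff_lt.mpr hBq)
      have hγne : q - β ≠ ⊤ := (lt_of_le_of_lt tsub_le_self (lt_top_iff_ne_top.mpr hqne)).ne
      obtain ⟨Λ₁, hΛ₁⟩ := loss_blowup_of_top hu hatomless hweak htop
        (M := ENNReal.ofReal r / (q - β))
        ((ENNReal.div_lt_top ENNReal.ofReal_ne_top hγ0).ne)
      refine ⟨max (max Λ₀ Λ₁ / ε) 1, lt_of_lt_of_le zero_lt_one (le_max_right _ _),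
        fun l hl => ?_⟩
      have hl0 : 0 < l := lt_of_lt_of_le zero_lt_one (le_of_lt (lt_of_le_of_lt (le_max_right _ _) hl))
      have hεl : max Λ₀ Λ₁ < ε * l := by
        have h1 : max Λ₀ Λ₁ / ε < l := lt_of_le_of_lt (le_max_left _ _) hl
        rw [mul_comm]
        calc max Λ₀ Λ₁ = (max Λ₀ Λ₁ / ε) * ε := (div_mul_cancel₀ _ (ne_of_gt hε0)).symm
        _ < l * ε := mul_lt_mul_of_pos_right h1 hε0
      by_contra hcon
      have h0 : (0 : EReal) ≤ ((∫⁻ ω, posPart (u (scale l Y' ω)) ∂μ : ℝ≥0∞) : EReal)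
          - ((∫⁻ ω, posPart (-(u (scale l Y' ω))) ∂μ : ℝ≥0∞) : EReal) := by
        have := not_lt.mp hcon
        rwa [expEU_congr_ae (hscale l)] at this
      obtain ⟨hNne, hNP⟩ := enn_sub_nonneg h0
      have hmq : posPart (-(u (-(ε * l)))) * q
          ≤ ∫⁻ ω, posPart (-(u (scale l Y' ω))) ∂μ := hNbound l hl0
      have hPF : ∫⁻ ω, posPart (u (scale l Y' ω)) ∂μ
          ≤ ∫⁻ ω, posPart (u ((ε * l) * (max (Y' ω) 0 / ε))) ∂μ := by
        refine lintegral_mono fun ω => posPart_mono (hu.mono ?_)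
        simp only [scale]
        have heq : (ε * l) * (max (Y' ω) 0 / ε) = l * max (Y' ω) 0 := by
          field_simp
        rw [heq]
        exact mul_le_mul_of_nonneg_left (le_max_left _ _) hl0.le
      have hεl0 : (0 : ℝ) ≤ ε * l := by positivity
      have hevW := hΛ₀ (ε * l) (le_trans (le_max_left _ _) hεl.le)
      rw [hW] at hevW
      have hcompW : expEU μ u (scale (ε * l) (pw B (-1) (fun ω => max (Y' ω) 0 / ε)))
          = ((∫⁻ ω in Bᶜ, posPart (u ((ε * l) * (max (Y' ω) 0 / ε))) ∂μ : ℝ≥0∞) : EReal)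
            - ((posPart (-(u ((ε * l) * (-1)))) * β : ℝ≥0∞) : EReal) :=
        expEU_scale_piecewise (μ := μ) hu hB
          (fun ω => div_nonneg (le_max_right _ _) hε0.le) (by norm_num) hεl0
      rw [hcompW] at hevW
      have hBzero : ∫⁻ ω in B, posPart (u ((ε * l) * (max (Y' ω) 0 / ε))) ∂μ = 0 := by
        have e : ∫⁻ ω in B, posPart (u ((ε * l) * (max (Y' ω) 0 / ε))) ∂μ
            = ∫⁻ _ in B, (0 : ℝ≥0∞) ∂μ := by
          refine setLIntegral_congr_fun hB (fun ω hω => ?_)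
          have hY'ω : Y' ω ≤ -ε := hBs hω
          have hmax : max (Y' ω) 0 = 0 := max_eq_right (by linarith)
          rw [hmax, zero_div, mul_zero, hu.norm]
          exact posPart_of_nonpos le_rfl
        rw [e, lintegral_zero]
      have hfull : ∫⁻ ω, posPart (u ((ε * l) * (max (Y' ω) 0 / ε))) ∂μ
          = ∫⁻ ω in Bᶜ, posPart (u ((ε * l) * (max (Y' ω) 0 / ε))) ∂μ := by
        rw [← lintegral_add_compl
          (f := fun ω => posPart (u ((ε * l) * (max (Y' ω) 0 / ε)))) hB, hBzero, zero_add]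
      have h3 : (∫⁻ ω in Bᶜ, posPart (u ((ε * l) * (max (Y' ω) 0 / ε))) ∂μ)
          ≤ posPart (-(u (-(ε * l)))) * β + ENNReal.ofReal r := by
        have h3' := enn_sub_le_coe hevW.le
        rwa [mul_neg_one] at h3'
      have hchain : posPart (-(u (-(ε * l)))) * q
          ≤ posPart (-(u (-(ε * l)))) * β + ENNReal.ofReal r :=
        le_trans hmq (le_trans hNP (le_trans hPF (le_trans (le_of_eq hfull) h3)))
      have hmne : posPart (-(u (-(ε * l)))) ≠ ⊤ := by
        intro hmt
        apply hNne
        apply top_le_iff.mp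
        calc (⊤ : ℝ≥0∞) = posPart (-(u (-(ε * l)))) * q := by
              rw [hmt, ENNReal.top_mul (ne_of_gt hq)]
        _ ≤ _ := hmq
      have hmβne : posPart (-(u (-(ε * l)))) * β ≠ ⊤ := ENNReal.mul_ne_top hmne hβne
      have hsplit : posPart (-(u (-(ε * l)))) * q
          = posPart (-(u (-(ε * l)))) * β + posPart (-(u (-(ε * l)))) * (q - β) := by
        rw [← mul_add, add_tsub_cancel_of_le hBq.le]
      have h4 : posPart (-(u (-(ε * l)))) * (q - β) ≤ ENNReal.ofReal r := by
        rw [hsplit] at hchain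
        exact (ENNReal.add_le_add_iff_left hmβne).mp hchain
      have h5 : posPart (-(u (-(ε * l)))) ≤ ENNReal.ofReal r / (q - β) :=
        (ENNReal.le_div_iff_mul_le (Or.inl hγ0) (Or.inl hγne)).mpr h4
      have h6 : ENNReal.ofReal r / (q - β) < posPart (-(u (-(ε * l)))) :=
        hΛ₁ (ε * l) (le_trans (le_max_right _ _) hεl.le)
      exact absurd h5 (not_le.mpr h6)
    · -- Case II : u bounded above
      have hpS : posPart (⨆ y, u y) ≠ ⊤ := posPart_ne_top htop
      obtain ⟨Λ, hΛ⟩ := loss_blowup_of_ne_top hu hunb htop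
        (M := posPart (⨆ y, u y) / q) ((ENNReal.div_lt_top hpS (ne_of_gt hq)).ne)
      refine ⟨max (Λ / ε) 1, lt_of_lt_of_le zero_lt_one (le_max_right _ _), fun l hl => ?_⟩
      have hl0 : 0 < l := lt_of_lt_of_le zero_lt_one (le_of_lt (lt_of_le_of_lt (le_max_right _ _) hl))
      have hεl : Λ ≤ ε * l := by
        have h1 : Λ / ε < l := lt_of_le_of_lt (le_max_left _ _) hl
        rw [mul_comm]
        calc Λ = (Λ / ε) * ε := (div_mul_cancel₀ _ (ne_of_gt hε0)).symm
        _ ≤ l * ε := mul_le_mul_of_nonneg_right h1.le hε0.le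
      rw [expEU_congr_ae (hscale l)]
      have hP : ∫⁻ ω, posPart (u (scale l Y' ω)) ∂μ ≤ posPart (⨆ y, u y) := by
        calc ∫⁻ ω, posPart (u (scale l Y' ω)) ∂μ
            ≤ ∫⁻ _, posPart (⨆ y, u y) ∂μ :=
              lintegral_mono fun ω => posPart_mono (le_iSup u _)
        _ = posPart (⨆ y, u y) := by rw [lintegral_const, measure_univ, mul_one]
      have hN := hNbound l hl0
      have hlt : posPart (⨆ y, u y) < posPart (-(u (-(ε * l)))) * q :=
        (ENNReal.div_lt_iff (Or.inl (ne_of_gt hq)) (Or.inl hqne)).mp (hΛ (ε * l) hεl)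
      calc expEU μ u (scale l Y')
          = ((∫⁻ ω, posPart (u (scale l Y' ω)) ∂μ : ℝ≥0∞) : EReal)
            - ((∫⁻ ω, posPart (-(u (scale l Y' ω))) ∂μ : ℝ≥0∞) : EReal) := rfl
      _ ≤ ((posPart (⨆ y, u y) : ℝ≥0∞) : EReal)
            - ((posPart (-(u (-(ε * l)))) * q : ℝ≥0∞) : EReal) :=
            EReal.sub_le_sub (EReal.coe_ennreal_le_coe_ennreal_iff.mpr hP)
              (EReal.coe_ennreal_le_coe_ennreal_iff.mpr hN)
      _ < 0 := enn_sub_lt_zero hlt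
  · -- sensitivity implies weak sensitivity
    intro hsens Y hY hYbad
    obtain ⟨l₀, hl₀, hneg⟩ := hsens Y hY hYbad
    have h1 : Filter.limsup (fun l : ℝ => expEU μ u (scale l Y)) atTop ≤ 0 := by
      apply Filter.limsup_le_of_le (h := ?_)
      exact eventually_atTop.mpr
        ⟨l₀ + 1, fun l hl => (hneg l (lt_of_lt_of_le (lt_add_one l₀) hl)).le⟩
    refine lt_of_le_of_lt h1 ?_
    rw [limConst_expEU hu]
    have h2 := hu.non_sat 0
    rwa [hu.norm] at h2

end Stmt15Main

/-- for an unbounded utility function `u` that is negatively star-shaped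
on `ℝ₊`, the expected utility functional `E_u` is sensitivity equivalent. -/
theorem stmt15 {Ω : Type*} [MeasurableSpace Ω] (μ : Measure Ω) [IsProbabilityMeasure μ]
    (hatomless : Atomless μ)
    (u : ℝ → EReal) (hu : IsUtilityFun u)
    (hunb : UnboundedFun u) (hnss : NegStarShapedPos u) :
    SensEquivUtility μ (expEU μ u) :=
  stmt15' μ hatomless u hu hunb hnss

end URPaper
end
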